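/- arXiv:math/0703506 — 6 statements merged into one kernel-verified Lean document; each statement's English description precedes it below -/
import Mathlib

section
/- Let 0 ≤ a < b and φ a strictly positive twice differentiable function on (a,b). Then every h ∈ C¹([a,b]) with lim_{r→a} r|h(r)|² φ'(r)/φ(r) = lim_{r→b} r|h(r)|² φ'(r)/φ(r), both limits finite, satisfies ∫ₐᵇ |h'(r)|² r dr ≥ ∫ₐᵇ −|h(r)|² (φ'(r) + r φ''(r))/φ(r) dr. -/
open MeasureTheory Filter Set

/-- Generalized 2-dimensional Poincaré inequality (weight k(r) = r). -/
theorem generalized_two_dim_poincare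
    (a b : ℝ) (ha : 0 ≤ a) (hab : a < b) (φ h : ℝ → ℝ)
    (hφpos : ∀ r ∈ Ioo a b, 0 < φ r)
    (hφ1 : ∀ r ∈ Ioo a b, DifferentiableAt ℝ φ r)
    (hφ2 : ∀ r ∈ Ioo a b, DifferentiableAt ℝ (deriv φ) r)
    (hh : ContDiffOn ℝ 1 h (Icc a b))
    (L : ℝ)
    (hla : Tendsto (fun r => r * (h r) ^ 2 * (deriv φ r / φ r))
      (nhdsWithin a (Ioi a)) (nhds L))
    (hlb : Tendsto (fun r => r * (h r) ^ 2 * (deriv φ r / φ r))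
      (nhdsWithin b (Iio b)) (nhds L)) :
    ∫ r in a..b, (deriv h r) ^ 2 * r ≥
      ∫ r in a..b, -(h r) ^ 2 * ((deriv φ r + r * deriv (deriv φ) r) / φ r) := by
  set A : ℝ → ℝ := fun r => (deriv h r) ^ 2 * r with hA
  set B : ℝ → ℝ := fun r => -(h r) ^ 2 * ((deriv φ r + r * deriv (deriv φ) r) / φ r) with hB
  set g : ℝ → ℝ := fun r => r * (h r) ^ 2 * (deriv φ r / φ r) with hg
  set s : ℝ → ℝ := fun r => r * (deriv h r - h r * (deriv φ r / φ r)) ^ 2 with hs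
  set E : ℝ → ℝ := fun r => (A r - B r) - s r with hE
  -- deriv h agrees with derivWithin on the interior
  have hderiv_eq : ∀ r ∈ Ioo a b, deriv h r = derivWithin h (Icc a b) r := by
    intro r hr
    exact (derivWithin_of_mem_nhds (Icc_mem_nhds hr.1 hr.2)).symm
  have hhd : ∀ r ∈ Ioo a b, HasDerivAt h (deriv h r) r := by
    intro r hr
    have : DifferentiableAt ℝ h r :=
      ((hh.differentiableOn one_ne_zero) r (Ioo_subset_Icc_self hr)).differentiableAt
        (Icc_mem_nhds hr.1 hr.2)
    exact this.hasDerivAt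
  -- continuity of deriv h on Ioo a b
  have hderivh_cont : ContinuousOn (deriv h) (Ioo a b) := by
    have h1 : ContinuousOn (derivWithin h (Icc a b)) (Icc a b) :=
      hh.continuousOn_derivWithin (uniqueDiffOn_Icc hab) le_rfl
    exact (h1.mono Ioo_subset_Icc_self).congr hderiv_eq
  have hφcont : ContinuousOn φ (Ioo a b) := fun r hr =>
    (hφ1 r hr).continuousAt.continuousWithinAt
  have hφ'cont : ContinuousOn (deriv φ) (Ioo a b) := fun r hr =>
    (hφ2 r hr).continuousAt.continuousWithinAt
  have hhcont : ContinuousOn h (Ioo a b) := hh.continuousOn.mono Ioo_subset_Icc_self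
  -- integrability of A on a..b
  have hAint : IntervalIntegrable A volume a b := by
    have hA'cont : ContinuousOn (fun r => (derivWithin h (Icc a b) r) ^ 2 * r) (Icc a b) :=
      ((hh.continuousOn_derivWithin (uniqueDiffOn_Icc hab) le_rfl).pow 2).mul continuousOn_id
    have hA'int : IntervalIntegrable (fun r => (derivWithin h (Icc a b) r) ^ 2 * r) volume a b :=
      (hA'cont.mono (by rw [uIcc_of_le hab.le])).intervalIntegrable
    rw [intervalIntegrable_iff_integrableOn_Ioc_of_le hab.le] at hA'int ⊢
    refine hA'int.congr ?_
    have hb0 : ∀ᵐ r ∂(volume.restrict (Ioc a b)), r ≠ b := by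
      refine ae_restrict_of_ae ?_
      rw [ae_iff]
      convert (measure_singleton b : (volume : Measure ℝ) {b} = 0) using 2
      ext x; simp
    filter_upwards [hb0, ae_restrict_mem measurableSet_Ioc] with r hr1 hr2
    rw [← hderiv_eq r ⟨hr2.1, lt_of_le_of_ne hr2.2 hr1⟩]
  -- nonnegativity of A on [a,b]
  have hAnn : ∀ u ∈ Icc a b, 0 ≤ A u := fun u hu =>
    mul_nonneg (sq_nonneg _) (ha.trans hu.1)
  by_cases hBint : IntervalIntegrable B volume a b
  · -- main case
    -- key derivative computation
    have key : ∀ r ∈ Ioo a b, HasDerivAt g (E r) r := by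
      intro r hr
      have hφr : HasDerivAt φ (deriv φ r) r := (hφ1 r hr).hasDerivAt
      have hφ'r : HasDerivAt (deriv φ) (deriv (deriv φ) r) r := (hφ2 r hr).hasDerivAt
      have hφne : φ r ≠ 0 := (hφpos r hr).ne'
      have hhr : HasDerivAt h (deriv h r) r := hhd r hr
      have h1 : HasDerivAt (fun x => x * (h x) ^ 2)
          (1 * (h r) ^ 2 + r * (2 * h r ^ 1 * deriv h r)) r :=
        (hasDerivAt_id r).mul (hhr.pow 2)
      have h2 : HasDerivAt (fun x => deriv φ x / φ x)
          ((deriv (deriv φ) r * φ r - deriv φ r * deriv φ r) / (φ r) ^ 2) r :=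
        hφ'r.div hφr hφne
      have h3 := h1.fun_mul h2
      convert h3 using 1
      · rfl
      · rfl
      simp only [hE, hA, hB, hs]
      field_simp
      ring
    -- FTC inequality on interior subintervals
    have step : ∀ c ∈ Ioo a b, ∀ d ∈ Ioo a b, c ≤ d →
        g d - g c ≤ ∫ r in c..d, (A r - B r) := by
      intro c hc d hd hcd
      have hsub : Icc c d ⊆ Ioo a b := Icc_subset_Ioo hc.1 hd.2
      have huicc : uIcc c d = Icc c d := uIcc_of_le hcd
      have hAc : IntervalIntegrable A volume c d := by
        refine (((hderivh_cont.pow 2).mul continuousOn_id).mono ?_).intervalIntegrable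
        rw [huicc]; exact hsub
      have hBc : IntervalIntegrable B volume c d :=
        hBint.mono_set (by rw [huicc, uIcc_of_le hab.le]; exact hsub.trans Ioo_subset_Icc_self)
      have hscont : ContinuousOn s (Ioo a b) := by
        refine continuousOn_id.mul ((hderivh_cont.sub (hhcont.mul
          (hφ'cont.div hφcont fun r hr => (hφpos r hr).ne'))).pow 2)
      have hsc : IntervalIntegrable s volume c d :=
        ((hscont.mono (huicc ▸ hsub : uIcc c d ⊆ Ioo a b))).intervalIntegrable
      have hEc : IntervalIntegrable E volume c d := (hAc.sub hBc).sub hsc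
      have hftc : ∫ r in c..d, E r = g d - g c := by
        refine intervalIntegral.integral_eq_sub_of_hasDerivAt (fun r hr => ?_) hEc
        exact key r (hsub (huicc ▸ hr))
      have hsnn : 0 ≤ ∫ r in c..d, s r := by
        refine intervalIntegral.integral_nonneg hcd fun u hu => ?_
        exact mul_nonneg (ha.trans (le_of_lt (hsub hu).1)) (sq_nonneg _)
      have hsplit : ∫ r in c..d, (A r - B r) = (∫ r in c..d, E r) + ∫ r in c..d, s r := by
        rw [← intervalIntegral.integral_add hEc hsc]
        congr 1; ext r; simp only [hE]; ring
      rw [hsplit, hftc]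
      linarith
    -- pass to the limit
    have hFint : IntervalIntegrable (fun r => A r - B r) volume a b := hAint.sub hBint
    set Φ : ℝ → ℝ := fun x => ∫ t in a..x, (A t - B t) with hΦdef
    have hΦcont : ContinuousOn Φ (uIcc a b) :=
      intervalIntegral.continuousOn_primitive_interval' hFint left_mem_uIcc
    have huab : uIcc a b = Icc a b := uIcc_of_le hab.le
    have hΦb : Tendsto Φ (nhdsWithin b (Iio b)) (nhds (Φ b)) := by
      have := (hΦcont b (by rw [huab]; exact ⟨hab.le, le_rfl⟩))
      have h2 : Tendsto Φ (nhdsWithin b (Ioo a b)) (nhds (Φ b)) :=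
        this.mono_left (nhdsWithin_mono b (huab ▸ Ioo_subset_Icc_self))
      rwa [nhdsWithin_Ioo_eq_nhdsLT hab] at h2
    have hΦa : Tendsto Φ (nhdsWithin a (Ioi a)) (nhds 0) := by
      have := (hΦcont a (by rw [huab]; exact ⟨le_rfl, hab.le⟩))
      have h2 : Tendsto Φ (nhdsWithin a (Ioo a b)) (nhds (Φ a)) :=
        this.mono_left (nhdsWithin_mono a (huab ▸ Ioo_subset_Icc_self))
      rw [nhdsWithin_Ioo_eq_nhdsGT hab] at h2
      simpa [hΦdef] using h2
    set l : Filter (ℝ × ℝ) := (nhdsWithin a (Ioi a)) ×ˢ (nhdsWithin b (Iio b)) with hl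
    haveI : l.NeBot := by
      rw [hl]; exact Filter.prod_neBot.mpr ⟨nhdsGT_neBot a, nhdsLT_neBot b⟩
    have ht1 : Tendsto (fun p : ℝ × ℝ => Φ p.2 - Φ p.1) l (nhds (Φ b - 0)) :=
      (hΦb.comp tendsto_snd).sub (hΦa.comp tendsto_fst)
    have ht2 : Tendsto (fun p : ℝ × ℝ => g p.2 - g p.1) l (nhds (L - L)) :=
      (hlb.comp tendsto_snd).sub (hla.comp tendsto_fst)
    have hev : ∀ᶠ p : ℝ × ℝ in l, g p.2 - g p.1 ≤ Φ p.2 - Φ p.1 := by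
      set m := (a + b) / 2 with hm
      have ham : a < m := by rw [hm]; linarith
      have hmb : m < b := by rw [hm]; linarith
      have e1 : ∀ᶠ c in nhdsWithin a (Ioi a), c ∈ Ioo a m :=
        Ioo_mem_nhdsGT_of_mem ⟨le_rfl, ham⟩
      have e2 : ∀ᶠ d in nhdsWithin b (Iio b), d ∈ Ioo m b :=
        Ioo_mem_nhdsLT_of_mem ⟨hmb, le_rfl⟩
      filter_upwards [Filter.prod_mem_prod e1 e2]
      rintro ⟨c, d⟩ ⟨hc, hd⟩
      have hc' : c ∈ Ioo a b := ⟨hc.1, hc.2.trans hmb⟩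
      have hd' : d ∈ Ioo a b := ⟨ham.trans hd.1, hd.2⟩
      have hcd : c ≤ d := (hc.2.trans hd.1).le
      have hsplit : Φ d - Φ c = ∫ r in c..d, (A r - B r) := by
        have h1 : IntervalIntegrable (fun r => A r - B r) volume a c :=
          hFint.mono_set (by rw [uIcc_of_le hc'.1.le, uIcc_of_le hab.le]
                             exact Icc_subset_Icc le_rfl hc'.2.le)
        have h2 : IntervalIntegrable (fun r => A r - B r) volume c d :=
          hFint.mono_set (by rw [uIcc_of_le hcd, uIcc_of_le hab.le]
                             exact Icc_subset_Icc hc'.1.le hd'.2.le)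
        have h3 := intervalIntegral.integral_add_adjacent_intervals h1 h2
        simp only [hΦdef]
        linarith [h3]
      rw [hsplit]
      exact step c hc' d hd' hcd
    have hfinal : L - L ≤ Φ b - 0 := le_of_tendsto_of_tendsto ht2 ht1 hev
    have hΦbv : Φ b = (∫ r in a..b, A r) - ∫ r in a..b, B r := by
      rw [hΦdef]; exact intervalIntegral.integral_sub hAint hBint
    rw [ge_iff_le]
    have : (0:ℝ) ≤ Φ b := by linarith
    linarith [hΦbv ▸ this]
  · rw [intervalIntegral.integral_undef hBint]
    exact intervalIntegral.integral_nonneg hab.le hAnn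
end

section
/- Let a < b and φ a strictly positive twice differentiable function on (a,b). Then every h ∈ C¹([a,b]) with lim_{r→a} |h(r)|² φ'(r)/φ(r) = lim_{r→b} |h(r)|² φ'(r)/φ(r), both limits finite, satisfies ∫ₐᵇ |h'(r)|² dr ≥ ∫ₐᵇ −|h(r)|² φ''(r)/φ(r) dr. -/
open MeasureTheory Filter Set

/-- Generalized Poincaré–Wirtinger inequality (weight k ≡ 1). -/
theorem generalized_poincare_wirtinger
    (a b : ℝ) (hab : a < b) (φ h : ℝ → ℝ)
    (hφpos : ∀ r ∈ Ioo a b, 0 < φ r)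
    (hφ1 : ∀ r ∈ Ioo a b, DifferentiableAt ℝ φ r)
    (hφ2 : ∀ r ∈ Ioo a b, DifferentiableAt ℝ (deriv φ) r)
    (hh : ContDiffOn ℝ 1 h (Icc a b))
    (L : ℝ)
    (hla : Tendsto (fun r => (h r) ^ 2 * (deriv φ r / φ r))
      (nhdsWithin a (Ioi a)) (nhds L))
    (hlb : Tendsto (fun r => (h r) ^ 2 * (deriv φ r / φ r))
      (nhdsWithin b (Iio b)) (nhds L)) :
    ∫ r in a..b, (deriv h r) ^ 2 ≥
      ∫ r in a..b, -(h r) ^ 2 * (deriv (deriv φ) r / φ r) := by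
  set f1 : ℝ → ℝ := fun r => (deriv h r) ^ 2 with hf1def
  set f2 : ℝ → ℝ := fun r => -(h r) ^ 2 * (deriv (deriv φ) r / φ r) with hf2def
  by_cases hint : IntervalIntegrable f2 volume a b
  swap
  · rw [ge_iff_le, intervalIntegral.integral_undef hint]
    exact intervalIntegral.integral_nonneg hab.le (fun u _ => sq_nonneg _)
  -- notation
  set g : ℝ → ℝ := fun r => deriv φ r / φ r with hgdef
  set F : ℝ → ℝ := fun r => (h r) ^ 2 * g r with hFdef
  set sq : ℝ → ℝ := fun r => (deriv h r - h r * g r) ^ 2 with hsqdef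
  -- continuity facts
  have hdw : ContinuousOn (derivWithin h (Icc a b)) (Icc a b) :=
    hh.continuousOn_derivWithin (uniqueDiffOn_Icc hab) le_rfl
  have heqd : ∀ r ∈ Ioo a b, derivWithin h (Icc a b) r = deriv h r :=
    fun r hr => derivWithin_of_mem_nhds (Icc_mem_nhds hr.1 hr.2)
  have hhc : ContinuousOn (deriv h) (Ioo a b) :=
    (hdw.mono Ioo_subset_Icc_self).congr (fun r hr => (heqd r hr).symm)
  have hhcont : ContinuousOn h (Ioo a b) := hh.continuousOn.mono Ioo_subset_Icc_self
  have hgc : ContinuousOn g (Ioo a b) := by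
    apply ContinuousOn.div
    · exact fun r hr => ((hφ2 r hr).continuousAt).continuousWithinAt
    · exact fun r hr => ((hφ1 r hr).continuousAt).continuousWithinAt
    · exact fun r hr => (hφpos r hr).ne'
  have hsqc : ContinuousOn sq (Ioo a b) := ((hhc.sub (hhcont.mul hgc)).pow 2)
  have hf1c : ContinuousOn f1 (Ioo a b) := hhc.pow 2
  -- f1 is interval integrable on [a,b]
  have hf1int : IntervalIntegrable f1 volume a b := by
    have h1 : IntervalIntegrable (fun r => (derivWithin h (Icc a b) r) ^ 2) volume a b := by
      apply ContinuousOn.intervalIntegrable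
      rw [uIcc_of_le hab.le]; exact hdw.pow 2
    apply h1.congr_ae
    have hbne : ∀ᵐ x ∂(volume.restrict (uIoc a b)), x ≠ b := by
      refine ae_restrict_of_ae ?_
      rw [ae_iff]
      have : {x | ¬ x ≠ b} = {b} := by ext x; simp
      rw [this]
      exact measure_singleton b
    have hmem : ∀ᵐ x ∂(volume.restrict (uIoc a b)), x ∈ uIoc a b :=
      ae_restrict_mem measurableSet_uIoc
    filter_upwards [hbne, hmem] with x hx1 hx2
    rw [uIoc_of_le hab.le] at hx2
    simp only [hf1def]
    rw [heqd x ⟨hx2.1, lt_of_le_of_ne hx2.2 hx1⟩]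
  -- derivative of F
  have hder : ∀ r ∈ Ioo a b, HasDerivAt F (f1 r - f2 r - sq r) r := by
    intro r hr
    have hhd : HasDerivAt h (deriv h r) r := by
      have : DifferentiableAt ℝ h r :=
        ((hh.differentiableOn one_ne_zero) r (Ioo_subset_Icc_self hr)).differentiableAt
          (Icc_mem_nhds hr.1 hr.2)
      exact this.hasDerivAt
    have hφd : HasDerivAt φ (deriv φ r) r := (hφ1 r hr).hasDerivAt
    have hφ2d : HasDerivAt (deriv φ) (deriv (deriv φ) r) r := (hφ2 r hr).hasDerivAt
    have hφne : φ r ≠ 0 := (hφpos r hr).ne'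
    have H : HasDerivAt F ((2 * h r ^ 1 * deriv h r) * g r +
        h r ^ 2 * ((deriv (deriv φ) r * φ r - deriv φ r * deriv φ r) / φ r ^ 2)) r := by
      have h1 : HasDerivAt (fun x => h x ^ 2) (2 * h r ^ 1 * deriv h r) r := by
        simpa using hhd.fun_pow 2
      have h2 : HasDerivAt g ((deriv (deriv φ) r * φ r - deriv φ r * deriv φ r) / φ r ^ 2) r :=
        hφ2d.div hφd hφne
      exact h1.mul h2
    convert H using 1
    simp only [hf1def, hf2def, hsqdef, hgdef]
    field_simp
    ring
  -- key inequality on compact subintervals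
  have key : ∀ u v : ℝ, u ∈ Ioo a b → v ∈ Ioo a b → u ≤ v →
      F v - F u ≤ ∫ r in u..v, (f1 r - f2 r) := by
    intro u v hu hv huv
    have hsub : Icc u v ⊆ Ioo a b := fun x hx => ⟨lt_of_lt_of_le hu.1 hx.1, lt_of_le_of_lt hx.2 hv.2⟩
    have hsubu : uIcc u v ⊆ Ioo a b := by rwa [uIcc_of_le huv]
    have hf2i : IntervalIntegrable f2 volume u v :=
      hint.mono_set (by rw [uIcc_of_le huv, uIcc_of_le hab.le]; exact hsub.trans Ioo_subset_Icc_self)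
    have hf1i : IntervalIntegrable f1 volume u v :=
      (hf1c.mono hsubu).intervalIntegrable
    have hsqi : IntervalIntegrable sq volume u v :=
      (hsqc.mono hsubu).intervalIntegrable
    have hψi : IntervalIntegrable (fun r => f1 r - f2 r - sq r) volume u v :=
      (hf1i.sub hf2i).sub hsqi
    have hftc : ∫ r in u..v, (f1 r - f2 r - sq r) = F v - F u :=
      intervalIntegral.integral_eq_sub_of_hasDerivAt
        (fun x hx => hder x (hsubu hx)) hψi
    have hsplit : ∫ r in u..v, (f1 r - f2 r) =
        (∫ r in u..v, (f1 r - f2 r - sq r)) + ∫ r in u..v, sq r := by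
      rw [← intervalIntegral.integral_add hψi hsqi]
      congr 1; ext r; ring
    have hsq0 : 0 ≤ ∫ r in u..v, sq r :=
      intervalIntegral.integral_nonneg huv (fun x _ => sq_nonneg _)
    rw [hsplit, hftc]; linarith
  -- midpoint
  set c : ℝ := (a + b) / 2 with hcdef
  have hcm : c ∈ Ioo a b := ⟨by simp only [hcdef]; linarith, by simp only [hcdef]; linarith⟩
  have h12 : IntervalIntegrable (fun r => f1 r - f2 r) volume a b := hf1int.sub hint
  have h12ac : IntervalIntegrable (fun r => f1 r - f2 r) volume a c :=
    h12.mono_set (by rw [uIcc_of_le hcm.1.le, uIcc_of_le hab.le]; exact Icc_subset_Icc le_rfl hcm.2.le)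
  have h12cb : IntervalIntegrable (fun r => f1 r - f2 r) volume c b :=
    h12.mono_set (by rw [uIcc_of_le hcm.2.le, uIcc_of_le hab.le]; exact Icc_subset_Icc hcm.1.le le_rfl)
  -- claim A : F c - L ≤ ∫_a^c
  have claimA : F c - L ≤ ∫ r in a..c, (f1 r - f2 r) := by
    have hcontA : ContinuousOn (fun u => ∫ r in u..c, (f1 r - f2 r)) (Icc a c) := by
      have := intervalIntegral.continuousOn_primitive_interval_left
        (f := fun r => f1 r - f2 r) (μ := volume) (a := a) (b := c) ?_
      · rwa [uIcc_of_le hcm.1.le] at this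
      · rw [uIcc_of_le hcm.1.le, integrableOn_Icc_iff_integrableOn_Ioc]
        exact (intervalIntegrable_iff_integrableOn_Ioc_of_le hcm.1.le).mp h12ac
    have htendI : Tendsto (fun u => ∫ r in u..c, (f1 r - f2 r)) (nhdsWithin a (Ioi a))
        (nhds (∫ r in a..c, (f1 r - f2 r))) := by
      have h1 : Tendsto (fun u => ∫ r in u..c, (f1 r - f2 r)) (nhdsWithin a (Icc a c))
          (nhds (∫ r in a..c, (f1 r - f2 r))) := hcontA a (left_mem_Icc.mpr hcm.1.le)
      exact h1.mono_left (nhdsWithin_le_of_mem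
        (mem_of_superset (Ioc_mem_nhdsGT hcm.1) Ioc_subset_Icc_self))
    have htendF : Tendsto (fun u => F c - F u) (nhdsWithin a (Ioi a)) (nhds (F c - L)) :=
      tendsto_const_nhds.sub hla
    refine le_of_tendsto_of_tendsto htendF htendI ?_
    filter_upwards [Ioc_mem_nhdsGT hcm.1] with u hu
    exact key u c ⟨hu.1, lt_of_le_of_lt hu.2 hcm.2⟩ hcm hu.2
  -- claim B : L - F c ≤ ∫_c^b
  have claimB : L - F c ≤ ∫ r in c..b, (f1 r - f2 r) := by
    have hcontB : ContinuousOn (fun v => ∫ r in c..v, (f1 r - f2 r)) (Icc c b) := by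
      have := intervalIntegral.continuousOn_primitive_interval
        (f := fun r => f1 r - f2 r) (μ := volume) (a := c) (b := b) ?_
      · rwa [uIcc_of_le hcm.2.le] at this
      · rw [uIcc_of_le hcm.2.le, integrableOn_Icc_iff_integrableOn_Ioc]
        exact (intervalIntegrable_iff_integrableOn_Ioc_of_le hcm.2.le).mp h12cb
    have htendI : Tendsto (fun v => ∫ r in c..v, (f1 r - f2 r)) (nhdsWithin b (Iio b))
        (nhds (∫ r in c..b, (f1 r - f2 r))) := by
      have h1 : Tendsto (fun v => ∫ r in c..v, (f1 r - f2 r)) (nhdsWithin b (Icc c b))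
          (nhds (∫ r in c..b, (f1 r - f2 r))) := hcontB b (right_mem_Icc.mpr hcm.2.le)
      exact h1.mono_left (nhdsWithin_le_of_mem
        (mem_of_superset (Ico_mem_nhdsLT hcm.2) Ico_subset_Icc_self))
    have htendF : Tendsto (fun v => F v - F c) (nhdsWithin b (Iio b)) (nhds (L - F c)) :=
      hlb.sub tendsto_const_nhds
    refine le_of_tendsto_of_tendsto htendF htendI ?_
    filter_upwards [Ico_mem_nhdsLT hcm.2] with v hv
    exact key c v hcm ⟨lt_of_lt_of_le hcm.1 hv.1, hv.2⟩ hv.1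
  -- conclusion
  have hsum : (∫ r in a..c, (f1 r - f2 r)) + (∫ r in c..b, (f1 r - f2 r))
      = ∫ r in a..b, (f1 r - f2 r) :=
    intervalIntegral.integral_add_adjacent_intervals h12ac h12cb
  have hfin : (0:ℝ) ≤ ∫ r in a..b, (f1 r - f2 r) := by
    rw [← hsum]; linarith
  rw [intervalIntegral.integral_sub hf1int hint] at hfin
  linarith
end

section
/- Let x ∈ C¹((0,R]) satisfy r·x'(r) + x(r)² ≤ −F(r) for all 0 < r ≤ R, where F is a nonnegative continuous function on (0,R]. Then lim_{r→0⁺} x(r) = 0. -/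
open Filter Set

/-- Lemma 4.2: a C¹ solution of the Riccati-type differential inequality
`r x'(r) + x(r)² ≤ -F(r)` on `(0,R]` with `F ≥ 0` continuous tends to `0` at `0⁺`. -/
theorem riccati_inequality_limit_zero
    (R : ℝ) (hR : 0 < R) (x x' F : ℝ → ℝ)
    (hx : ∀ r ∈ Ioc 0 R, HasDerivAt x (x' r) r)
    (hx' : ContinuousOn x' (Ioc 0 R))
    (hF : ContinuousOn F (Ioc 0 R))
    (hFnn : ∀ r ∈ Ioc 0 R, 0 ≤ F r)
    (hineq : ∀ r ∈ Ioc 0 R, r * x' r + (x r) ^ 2 ≤ -F r) :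
    Tendsto x (nhdsWithin 0 (Ioi 0)) (nhds 0) := by
  -- pointwise derivative bound
  have hx'le : ∀ r ∈ Ioc 0 R, x' r ≤ -(x r) ^ 2 / r := by
    intro r hr
    have hr0 : 0 < r := hr.1
    have h2 : r * x' r ≤ -(x r) ^ 2 := by nlinarith [hFnn r hr, hineq r hr]
    rw [le_div_iff₀ hr0]
    linarith [h2]
  have hxcont : ContinuousOn x (Ioc 0 R) := fun r hr =>
    (hx r hr).continuousAt.continuousWithinAt
  -- x is antitone on (0, R]
  have hanti : AntitoneOn x (Ioc 0 R) := by
    apply antitoneOn_of_deriv_nonpos (convex_Ioc 0 R) hxcont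
    · intro r hr
      rw [interior_Ioc] at hr
      exact ((hx r (Ioo_subset_Ioc_self hr)).differentiableAt).differentiableWithinAt
    · intro r hr
      rw [interior_Ioc] at hr
      have hr' : r ∈ Ioc 0 R := Ioo_subset_Ioc_self hr
      rw [(hx r hr').deriv]
      have h1 := hx'le r hr'
      have h2 : -(x r) ^ 2 / r ≤ 0 :=
        div_nonpos_of_nonpos_of_nonneg (neg_nonpos.2 (sq_nonneg _)) (le_of_lt hr.1)
      linarith
  -- x is nonpositive on (0, R]
  have hxnp : ∀ r ∈ Ioc 0 R, x r ≤ 0 := by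
    by_contra hcon
    push_neg at hcon
    obtain ⟨r₀, hr₀, hpos⟩ := hcon
    have hsub : Ioc 0 r₀ ⊆ Ioc 0 R := Ioc_subset_Ioc_right hr₀.2
    have hge : ∀ r ∈ Ioc 0 r₀, x r₀ ≤ x r := fun r hr => hanti (hsub hr) hr₀ hr.2
    have hxpos : ∀ r ∈ Ioc 0 r₀, 0 < x r := fun r hr => lt_of_lt_of_le hpos (hge r hr)
    set g : ℝ → ℝ := fun r => (x r)⁻¹ - Real.log r with hgdef
    have hgd : ∀ r ∈ Ioc 0 r₀, HasDerivAt g (-x' r / x r ^ 2 - r⁻¹) r := by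
      intro r hr
      exact ((hx r (hsub hr)).inv (hxpos r hr).ne').sub (Real.hasDerivAt_log hr.1.ne')
    have hgmono : MonotoneOn g (Ioc 0 r₀) := by
      apply monotoneOn_of_deriv_nonneg (convex_Ioc 0 r₀)
      · intro r hr
        exact (((hx r (hsub hr)).continuousAt.inv₀ (hxpos r hr).ne').continuousWithinAt).sub
          ((Real.continuousAt_log hr.1.ne').continuousWithinAt)
      · intro r hr
        rw [interior_Ioc] at hr
        exact (hgd r (Ioo_subset_Ioc_self hr)).differentiableAt.differentiableWithinAt
      · intro r hr
        rw [interior_Ioc] at hr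
        have hr' : r ∈ Ioc 0 r₀ := Ioo_subset_Ioc_self hr
        rw [(hgd r hr').deriv]
        have h1 := hx'le r (hsub hr')
        have hxr := hxpos r hr'
        have hr0 : (0:ℝ) < r := hr.1
        have key : r⁻¹ ≤ -x' r / x r ^ 2 := by
          rw [le_div_iff₀ (by positivity : (0:ℝ) < x r ^ 2)]
          rw [le_div_iff₀ hr0] at h1
          have : x' r * r ≤ -(x r)^2 := h1
          rw [inv_mul_le_iff₀ hr0]
          nlinarith
        linarith
    -- choose small r to contradict
    set r := Real.exp (Real.log r₀ - (x r₀)⁻¹ - 1) with hrdef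
    have hrpos : 0 < r := Real.exp_pos _
    have hrlt : r < r₀ := by
      have : Real.log r₀ - (x r₀)⁻¹ - 1 < Real.log r₀ := by
        have : 0 < (x r₀)⁻¹ := inv_pos.2 hpos
        linarith
      calc r < Real.exp (Real.log r₀) := Real.exp_lt_exp.2 this
        _ = r₀ := Real.exp_log hr₀.1
    have hrmem : r ∈ Ioc 0 r₀ := ⟨hrpos, hrlt.le⟩
    have hle := hgmono hrmem (right_mem_Ioc.2 hr₀.1) hrlt.le
    have hlogr : Real.log r = Real.log r₀ - (x r₀)⁻¹ - 1 := Real.log_exp _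
    have hxr : 0 < (x r)⁻¹ := inv_pos.2 (hxpos r hrmem)
    simp only [hgdef, hlogr] at hle
    linarith
  -- conclude the limit
  rw [Metric.tendsto_nhdsWithin_nhds]
  intro ε hε
  -- find r₁ with x r₁ > -ε
  have hεsq : (0:ℝ) < ε ^ 2 := by positivity
  have hex : ∃ r₁ ∈ Ioc 0 R, -ε < x r₁ := by
    by_contra hcon
    push_neg at hcon
    -- then x ≤ -ε everywhere, k r = x r + ε² log r is antitone
    set k : ℝ → ℝ := fun r => x r + ε ^ 2 * Real.log r with hkdef
    have hkd : ∀ r ∈ Ioc 0 R, HasDerivAt k (x' r + ε ^ 2 * r⁻¹) r := by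
      intro r hr
      exact (hx r hr).add ((Real.hasDerivAt_log hr.1.ne').const_mul (ε ^ 2))
    have hkanti : AntitoneOn k (Ioc 0 R) := by
      apply antitoneOn_of_deriv_nonpos (convex_Ioc 0 R)
      · intro r hr
        exact ((hx r hr).continuousAt.continuousWithinAt).add
          (((Real.continuousAt_log hr.1.ne').continuousWithinAt).const_smul (ε ^ 2))
      · intro r hr
        rw [interior_Ioc] at hr
        exact (hkd r (Ioo_subset_Ioc_self hr)).differentiableAt.differentiableWithinAt
      · intro r hr
        rw [interior_Ioc] at hr
        have hr' : r ∈ Ioc 0 R := Ioo_subset_Ioc_self hr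
        rw [(hkd r hr').deriv]
        have h1 := hx'le r hr'
        have hr0 : (0:ℝ) < r := hr.1
        have hxle : x r ≤ -ε := hcon r hr'
        have hsq : ε ^ 2 ≤ (x r) ^ 2 := by nlinarith
        have hdiv : (ε ^ 2 - (x r) ^ 2) / r ≤ 0 :=
          div_nonpos_of_nonpos_of_nonneg (by linarith) hr0.le
        have heq : -(x r) ^ 2 / r + ε ^ 2 * r⁻¹ = (ε ^ 2 - (x r) ^ 2) / r := by ring
        linarith
    set t := Real.exp (Real.log R + (ε + x R) / ε ^ 2 - 1) with htdef
    have htpos : 0 < t := Real.exp_pos _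
    set r := min R t with hrdef
    have hrpos : 0 < r := lt_min hR htpos
    have hrmem : r ∈ Ioc 0 R := ⟨hrpos, min_le_left _ _⟩
    have hRmem : R ∈ Ioc 0 R := right_mem_Ioc.2 hR
    have hle := hkanti hrmem hRmem (min_le_left _ _)
    have hlogr : Real.log r ≤ Real.log R + (ε + x R) / ε ^ 2 - 1 := by
      calc Real.log r ≤ Real.log t := Real.log_le_log hrpos (min_le_right _ _)
        _ = _ := Real.log_exp _
    -- hle : k R ≤ k r : x R + ε² log R ≤ x r + ε² log r
    simp only [hkdef] at hle
    have hxrle : x r ≤ -ε := hcon r hrmem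
    have : ε ^ 2 * Real.log r ≤ ε ^ 2 * (Real.log R + (ε + x R) / ε ^ 2 - 1) :=
      mul_le_mul_of_nonneg_left hlogr (le_of_lt hεsq)
    have hfield : ε ^ 2 * (Real.log R + (ε + x R) / ε ^ 2 - 1)
        = ε ^ 2 * Real.log R + (ε + x R) - ε ^ 2 := by
      field_simp
    nlinarith
  obtain ⟨r₁, hr₁, hr₁x⟩ := hex
  refine ⟨r₁, hr₁.1, ?_⟩
  intro r hrI hrd
  have hr0 : 0 < r := hrI
  rw [Real.dist_eq, sub_zero] at hrd
  have hrlt : r < r₁ := by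
    have := abs_lt.1 hrd
    exact this.2
  have hrmem : r ∈ Ioc 0 R := ⟨hr0, hrlt.le.trans hr₁.2⟩
  have h1 : x r₁ ≤ x r := hanti hrmem hr₁ hrlt.le
  have h2 : x r ≤ 0 := hxnp r hrmem
  rw [Real.dist_eq, sub_zero, abs_lt]
  constructor <;> [linarith; linarith]
end

section
/- Suppose φ is a strictly positive C² solution on (0,R) of φ''(r) + φ'(r)/r + v(r)φ(r) = 0, where v ≥ 0 is continuous on (0,R). Then liminf_{r→0⁺} r·φ'(r)/φ(r) ≥ 0 (in fact lim_{r→0⁺} r φ'(r)/φ(r) = 0), and limsup_{r→R⁻} φ'(r)/φ(r) < ∞ provided φ is positive on (0,R). -/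
open Filter Set

lemma log_lower_bound {φ : ℝ → ℝ} {b c : ℝ} (hb : 0 < b)
    (hcont : ContinuousOn φ (Ioc 0 b))
    (hd : ∀ r ∈ Ioo 0 b, DifferentiableAt ℝ φ r)
    (hder : ∀ r ∈ Ioo 0 b, deriv φ r ≤ c / r) :
    ∀ r ∈ Ioc 0 b, φ b + c * (Real.log r - Real.log b) ≤ φ r := by
  set h : ℝ → ℝ := fun r => φ r - c * Real.log r with hh
  have hlogd : ∀ r ∈ Ioo 0 b, HasDerivAt (fun r : ℝ => c * Real.log r) (c * r⁻¹) r :=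
    fun r hr => (Real.hasDerivAt_log (ne_of_gt hr.1)).const_mul c
  have hanti : AntitoneOn h (Ioc 0 b) := by
    apply antitoneOn_of_deriv_nonpos (convex_Ioc 0 b)
    · exact hcont.sub (continuousOn_const.mul
        (Real.continuousOn_log.mono (fun x hx => ne_of_gt hx.1)))
    · rw [interior_Ioc]
      exact fun r hr => ((hd r hr).sub (hlogd r hr).differentiableAt).differentiableWithinAt
    · rw [interior_Ioc]
      intro r hr
      rw [hh]
      rw [deriv_fun_sub (hd r hr) (hlogd r hr).differentiableAt, (hlogd r hr).deriv]
      have := hder r hr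
      rw [div_eq_mul_inv] at this
      linarith
  intro r hr
  have := hanti hr (right_mem_Ioc.2 hb) hr.2
  simp only [hh] at this
  linarith

/-- Lemma 4.3: boundary asymptotics of a positive solution of
`φ'' + φ'/r + v φ = 0` on `(0,R)`: `r φ'(r)/φ(r) → 0` as `r → 0⁺`
(so in particular the liminf is `≥ 0`), and `φ'/φ` is bounded above near `R`. -/
theorem positive_solution_boundary_asymptotics
    (R : ℝ) (hR : 0 < R) (φ v : ℝ → ℝ)
    (hv : ContinuousOn v (Ioo 0 R)) (hvnn : ∀ r ∈ Ioo 0 R, 0 ≤ v r)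
    (hφC2 : ContDiffOn ℝ 2 φ (Ioo 0 R))
    (hφpos : ∀ r ∈ Ioo 0 R, 0 < φ r)
    (hode : ∀ r ∈ Ioo 0 R,
      deriv (deriv φ) r + deriv φ r / r + v r * φ r = 0) :
    Tendsto (fun r => r * deriv φ r / φ r) (nhdsWithin 0 (Ioi 0)) (nhds 0) ∧
    ∃ M : ℝ, ∀ᶠ r in nhdsWithin R (Iio R), deriv φ r / φ r ≤ M := by
  have hopen : IsOpen (Ioo (0:ℝ) R) := isOpen_Ioo
  have hφd : DifferentiableOn ℝ φ (Ioo 0 R) := hφC2.differentiableOn (by norm_num)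
  have hφ'C1 : ContDiffOn ℝ 1 (deriv φ) (Ioo 0 R) :=
    hφC2.deriv_of_isOpen hopen (by norm_num)
  have hφat : ∀ r ∈ Ioo 0 R, DifferentiableAt ℝ φ r :=
    fun r hr => hφd.differentiableAt (hopen.mem_nhds hr)
  have hφ'at : ∀ r ∈ Ioo 0 R, DifferentiableAt ℝ (deriv φ) r :=
    fun r hr => (hφ'C1.differentiableOn one_ne_zero).differentiableAt (hopen.mem_nhds hr)
  set f : ℝ → ℝ := fun r => r * deriv φ r with hfdef
  have hfderiv : ∀ r ∈ Ioo 0 R, HasDerivAt f (-(r * (v r * φ r))) r := by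
    intro r hr
    have hr0 : r ≠ 0 := ne_of_gt hr.1
    have h1 : HasDerivAt f (1 * deriv φ r + r * deriv (deriv φ) r) r :=
      (hasDerivAt_id r).mul (hφ'at r hr).hasDerivAt
    convert h1 using 1
    have h := hode r hr
    field_simp at h
    nlinarith [h]
  have hfanti : AntitoneOn f (Ioo 0 R) := by
    apply antitoneOn_of_deriv_nonpos (convex_Ioo 0 R)
    · exact fun r hr => (hfderiv r hr).continuousAt.continuousWithinAt
    · rw [interior_Ioo]
      exact fun r hr => (hfderiv r hr).differentiableAt.differentiableWithinAt
    · rw [interior_Ioo]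
      intro r hr
      rw [(hfderiv r hr).deriv]
      have h1 : 0 ≤ r * (v r * φ r) :=
        mul_nonneg (le_of_lt hr.1) (mul_nonneg (hvnn r hr) (le_of_lt (hφpos r hr)))
      linarith
  -- Step: f ≤ 0 on (0,R)
  have hfle0 : ∀ r ∈ Ioo 0 R, f r ≤ 0 := by
    by_contra hcon
    push_neg at hcon
    obtain ⟨r₀, hr₀, hfr₀⟩ := hcon
    set c : ℝ := f r₀ with hcdef
    have hc : 0 < c := hfr₀
    have hsub : Ioc 0 r₀ ⊆ Ioo 0 R := fun x hx => ⟨hx.1, lt_of_le_of_lt hx.2 hr₀.2⟩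
    have hsub' : Ioo 0 r₀ ⊆ Ioo 0 R := fun x hx => ⟨hx.1, hx.2.trans hr₀.2⟩
    have key := log_lower_bound (φ := fun x => -φ x) (b := r₀) (c := -c) hr₀.1
      ((hφd.continuousOn.mono hsub).neg)
      (fun r hr => (hφat r (hsub' hr)).neg)
      (by
        intro r hr
        have hfr : c ≤ f r := hfanti (hsub' hr) hr₀ (le_of_lt hr.2)
        rw [deriv.fun_neg, neg_div, neg_le_neg_iff, div_le_iff₀ hr.1]
        calc c ≤ f r := hfr
        _ = deriv φ r * r := mul_comm _ _)
    -- pick small r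
    set r : ℝ := min (r₀ / 2) (Real.exp ((-φ r₀) / c + Real.log r₀ - 1)) with hrdef
    have hrpos : 0 < r := lt_min (by linarith [hr₀.1]) (Real.exp_pos _)
    have hrmem : r ∈ Ioc 0 r₀ := ⟨hrpos, le_trans (min_le_left _ _) (by linarith [hr₀.1])⟩
    have hlogr : Real.log r ≤ (-φ r₀) / c + Real.log r₀ - 1 := by
      calc Real.log r ≤ Real.log (Real.exp ((-φ r₀) / c + Real.log r₀ - 1)) :=
            Real.log_le_log hrpos (min_le_right _ _)
      _ = _ := Real.log_exp _
    have hkey := key r hrmem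
    have hφr : 0 < φ r := hφpos r (hsub hrmem)
    have : φ r ≤ φ r₀ + c * (Real.log r - Real.log r₀) := by linarith
    have hcc : c * (Real.log r - Real.log r₀) ≤ c * ((-φ r₀) / c - 1) := by
      apply mul_le_mul_of_nonneg_left _ (le_of_lt hc)
      linarith
    have : c * ((-φ r₀) / c - 1) = -φ r₀ - c := by field_simp
    nlinarith
  have hφ'le : ∀ r ∈ Ioo 0 R, deriv φ r ≤ 0 := by
    intro r hr
    have h : r * deriv φ r ≤ 0 := hfle0 r hr
    by_contra hd
    push_neg at hd
    nlinarith [mul_pos hr.1 hd]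
  have hφanti : AntitoneOn φ (Ioo 0 R) := by
    apply antitoneOn_of_deriv_nonpos (convex_Ioo 0 R) hφd.continuousOn
    · rw [interior_Ioo]
      exact fun r hr => (hφat r hr).differentiableWithinAt
    · rw [interior_Ioo]; exact hφ'le
  set a : ℝ := R / 2 with hadef
  have ha : a ∈ Ioo 0 R := ⟨by linarith, by linarith⟩
  have hφa : 0 < φ a := hφpos a ha
  constructor
  · -- main limit
    rw [NormedAddCommGroup.tendsto_nhds_zero]
    intro ε hε
    have hεφ : 0 < ε / 2 * φ a := by positivity
    have hqle : ∀ r ∈ Ioo 0 R, r * deriv φ r / φ r ≤ 0 :=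
      fun r hr => div_nonpos_iff.2 (Or.inr ⟨hfle0 r hr, le_of_lt (hφpos r hr)⟩)
    by_cases hcase : ∃ r₁ ∈ Ioo 0 a, -(ε / 2 * φ a) < f r₁
    · obtain ⟨r₁, hr₁, hfr₁⟩ := hcase
      have hr₁R : r₁ ∈ Ioo 0 R := ⟨hr₁.1, hr₁.2.trans ha.2⟩
      filter_upwards [Ioo_mem_nhdsGT_of_mem (left_mem_Ico.2 hr₁.1)] with r hr
      have hrR : r ∈ Ioo 0 R := ⟨hr.1, hr.2.trans hr₁R.2⟩
      have hfr : f r₁ ≤ f r := hfanti hrR hr₁R (le_of_lt hr.2)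
      have hφr : φ a ≤ φ r := hφanti hrR ha (le_of_lt (hr.2.trans hr₁.2))
      have hφrpos : 0 < φ r := hφpos r hrR
      rw [Real.norm_eq_abs, abs_of_nonpos (hqle r hrR)]
      have h1 : -(r * deriv φ r / φ r) = (-f r) / φ r := by rw [hfdef, neg_div]
      rw [h1]
      have h2 : (-f r) / φ r ≤ (ε / 2 * φ a) / φ a := by
        apply div_le_div₀ (le_of_lt hεφ) (by linarith) hφa hφr
      have h3 : (ε / 2 * φ a) / φ a = ε / 2 := by field_simp
      linarith
    · push_neg at hcase
      set c : ℝ := ε / 2 * φ a with hcdef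
      have key := log_lower_bound (φ := φ) (b := a) (c := -c) ha.1
        (hφd.continuousOn.mono (fun x hx => ⟨hx.1, lt_of_le_of_lt hx.2 ha.2⟩))
        (fun r hr => hφat r ⟨hr.1, hr.2.trans ha.2⟩)
        (by
          intro r hr
          have hfr : r * deriv φ r ≤ -c := hcase r hr
          rw [le_div_iff₀ hr.1, mul_comm]
          exact hfr)
      -- D r := φ a + c * (log a - log r) tends to atTop
      have hD : Tendsto (fun r : ℝ => φ a + c * (Real.log a - Real.log r))
          (nhdsWithin 0 (Ioi 0)) atTop := by
        apply tendsto_atTop_add_const_left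
        apply Tendsto.const_mul_atTop hεφ
        simp_rw [sub_eq_add_neg]
        apply tendsto_atTop_add_const_left
        exact tendsto_neg_atBot_atTop.comp Real.tendsto_log_nhdsGT_zero
      have hq0 : Tendsto (fun r : ℝ => (-f a) / (φ a + c * (Real.log a - Real.log r)))
          (nhdsWithin 0 (Ioi 0)) (nhds 0) := Tendsto.div_atTop tendsto_const_nhds hD
      rw [NormedAddCommGroup.tendsto_nhds_zero] at hq0
      filter_upwards [Ioo_mem_nhdsGT_of_mem (left_mem_Ico.2 ha.1), hq0 ε hε] with r hr hb
      have hrR : r ∈ Ioo 0 R := ⟨hr.1, hr.2.trans ha.2⟩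
      have hfr : f a ≤ f r := hfanti hrR ha (le_of_lt hr.2)
      have hkey := key r ⟨hr.1, le_of_lt hr.2⟩
      have hDpos : 0 < φ a + (-c) * (Real.log r - Real.log a) := by
        have : Real.log r ≤ Real.log a := Real.log_le_log hr.1 (le_of_lt hr.2)
        nlinarith
      have hφrpos : 0 < φ r := hφpos r hrR
      rw [Real.norm_eq_abs, abs_of_nonpos (hqle r hrR)]
      have h1 : -(r * deriv φ r / φ r) = (-f r) / φ r := by rw [hfdef, neg_div]
      rw [h1]
      have hfa0 : 0 ≤ -f a := neg_nonneg.2 (hfle0 a ha)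
      have h2 : (-f r) / φ r ≤ (-f a) / (φ a + (-c) * (Real.log r - Real.log a)) :=
        div_le_div₀ hfa0 (by linarith) hDpos (by linarith)
      have h3 : φ a + (-c) * (Real.log r - Real.log a)
          = φ a + c * (Real.log a - Real.log r) := by ring
      rw [h3] at h2
      rw [Real.norm_eq_abs] at hb
      calc (-f r) / φ r ≤ _ := h2
        _ ≤ |(-f a) / (φ a + c * (Real.log a - Real.log r))| := le_abs_self _
        _ < ε := hb
  · -- bounded above near R
    refine ⟨0, ?_⟩
    filter_upwards [Ioo_mem_nhdsLT_of_mem (right_mem_Ioc.2 ha.2)] with r hr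
    have hrR : r ∈ Ioo 0 R := ⟨lt_trans ha.1 hr.1, hr.2⟩
    exact div_nonpos_iff.2 (Or.inr ⟨hφ'le r hrR, le_of_lt (hφpos r hrR)⟩)
end

section
/- Let v ≥ 0 be continuous on (0,δ). The equation y''(r) + y'(r)/r + v(r)y(r) = 0 has a strictly positive C² supersolution on (0,δ) (i.e. a positive y with y'' + y'/r + v y ≤ 0) if and only if it has a strictly positive C² solution on (0,δ). -/
open Filter Set

section Helpers
open MeasureTheory Nat

private lemma factorial_integral_bound {r₀ r M : ℝ} {k : ℕ} {f : ℝ → ℝ}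
    (hf : ContinuousOn f (uIcc r₀ r)) (hM : 0 ≤ M)
    (hb : ∀ t ∈ uIcc r₀ r, |f t| ≤ M * |t - r₀| ^ k / k !) :
    |∫ t in r₀..r, f t| ≤ M * |r - r₀| ^ (k + 1) / (k + 1)! := by
  have hfac : (0:ℝ) < k ! := by exact_mod_cast k.factorial_pos
  have hfac1 : ((k+1)! : ℝ) = (k+1) * k ! := by exact_mod_cast Nat.factorial_succ k
  rcases le_total r₀ r with h | h
  · have hIcc : uIcc r₀ r = Icc r₀ r := uIcc_of_le h
    have habs : IntervalIntegrable (fun t => |f t|) volume r₀ r := hf.abs.intervalIntegrable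
    have hpoly : IntervalIntegrable (fun t => M * (t - r₀)^k / k !) volume r₀ r :=
      (Continuous.intervalIntegrable (by fun_prop) _ _)
    have h2 : ∫ t in r₀..r, |f t| ≤ ∫ t in r₀..r, M * (t - r₀)^k / k ! := by
      apply intervalIntegral.integral_mono_on h habs hpoly
      intro t ht
      have := hb t (hIcc ▸ ht)
      rwa [abs_of_nonneg (sub_nonneg.2 ht.1)] at this
    have h3 : ∫ t in r₀..r, M * (t - r₀)^k / k ! = M * (r - r₀)^(k+1) / (k+1)! := by
      have e1 : ∫ t in r₀..r, M * (t - r₀)^k / k ! = (M / k !) * ∫ t in r₀..r, (t - r₀)^k := by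
        rw [← intervalIntegral.integral_const_mul]
        congr 1; ext t; ring
      have e2 : (∫ t in r₀..r, (t - r₀)^k) = ∫ t in (0:ℝ)..(r - r₀), t ^ k := by
        rw [intervalIntegral.integral_comp_sub_right (fun t => t ^ k) r₀, sub_self]
      rw [e1, e2, integral_pow, hfac1, zero_pow (by omega), sub_zero]
      rw [_root_.div_mul_div_comm]
      ring
    calc |∫ t in r₀..r, f t| ≤ ∫ t in r₀..r, |f t| :=
          intervalIntegral.abs_integral_le_integral_abs h
      _ ≤ M * (r - r₀)^(k+1) / (k+1)! := h3 ▸ h2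
      _ = M * |r - r₀|^(k+1) / (k+1)! := by rw [abs_of_nonneg (sub_nonneg.2 h)]
  · have hIcc : uIcc r₀ r = Icc r r₀ := uIcc_of_ge h
    have habs : IntervalIntegrable (fun t => |f t|) volume r r₀ := hf.abs.intervalIntegrable.symm
    have hpoly : IntervalIntegrable (fun t => M * (r₀ - t)^k / k !) volume r r₀ :=
      (Continuous.intervalIntegrable (by fun_prop) _ _)
    have h2 : ∫ t in r..r₀, |f t| ≤ ∫ t in r..r₀, M * (r₀ - t)^k / k ! := by
      apply intervalIntegral.integral_mono_on h habs hpoly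
      intro t ht
      have := hb t (hIcc ▸ ht)
      rwa [abs_of_nonpos (sub_nonpos.2 ht.2), neg_sub] at this
    have h3 : ∫ t in r..r₀, M * (r₀ - t)^k / k ! = M * (r₀ - r)^(k+1) / (k+1)! := by
      have e1 : ∫ t in r..r₀, M * (r₀ - t)^k / k ! = (M / k !) * ∫ t in r..r₀, (r₀ - t)^k := by
        rw [← intervalIntegral.integral_const_mul]
        congr 1; ext t; ring
      have e2 : (∫ t in r..r₀, (r₀ - t)^k) = ∫ t in (0:ℝ)..(r₀ - r), t ^ k := by
        rw [intervalIntegral.integral_comp_sub_left (fun t => t ^ k) r₀, sub_self]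
      rw [e1, e2, integral_pow, hfac1, zero_pow (by omega), sub_zero]
      rw [_root_.div_mul_div_comm]
      ring
    calc |∫ t in r₀..r, f t| = |∫ t in r..r₀, f t| := by
          rw [intervalIntegral.integral_symm, abs_neg]
      _ ≤ ∫ t in r..r₀, |f t| := intervalIntegral.abs_integral_le_integral_abs h
      _ ≤ M * (r₀ - r)^(k+1) / (k+1)! := h3 ▸ h2
      _ = M * |r - r₀|^(k+1) / (k+1)! := by
          rw [abs_of_nonpos (sub_nonpos.2 h), neg_sub]

private lemma primitive_hasDerivAt {δ : ℝ} {f : ℝ → ℝ} (hf : ContinuousOn f (Ioo 0 δ))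
    (hr₀ : δ/2 ∈ Ioo (0:ℝ) δ) {r : ℝ} (hr : r ∈ Ioo 0 δ) :
    HasDerivAt (fun x => ∫ t in (δ/2)..x, f t) (f r) r := by
  have hsub : uIcc (δ/2) r ⊆ Ioo 0 δ := (ordConnected_Ioo).uIcc_subset hr₀ hr
  exact intervalIntegral.integral_hasDerivAt_right ((hf.mono hsub).intervalIntegrable)
    (hf.stronglyMeasurableAtFilter isOpen_Ioo r hr)
    (hf.continuousAt (isOpen_Ioo.mem_nhds hr))

private lemma primitive_sign {δ : ℝ} {f : ℝ → ℝ} (hf : ContinuousOn f (Ioo 0 δ))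
    (hr₀ : δ/2 ∈ Ioo (0:ℝ) δ) (hpos : ∀ t ∈ Ioo 0 δ, 0 ≤ f t) :
    (∀ r ∈ Ioo 0 δ, δ/2 ≤ r → 0 ≤ ∫ t in (δ/2)..r, f t) ∧
    (∀ r ∈ Ioo 0 δ, r ≤ δ/2 → (∫ t in (δ/2)..r, f t) ≤ 0) := by
  constructor
  · intro r hr h
    have hIcc : Icc (δ/2) r ⊆ Ioo 0 δ := by
      rw [← uIcc_of_le h]; exact ordConnected_Ioo.uIcc_subset hr₀ hr
    exact intervalIntegral.integral_nonneg h (fun t ht => hpos t (hIcc ht))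
  · intro r hr h
    have hIcc : Icc r (δ/2) ⊆ Ioo 0 δ := by
      rw [← uIcc_of_ge h]; exact ordConnected_Ioo.uIcc_subset hr₀ hr
    have h1 : 0 ≤ ∫ t in r..(δ/2), f t :=
      intervalIntegral.integral_nonneg h (fun t ht => hpos t (hIcc ht))
    have hsymm := intervalIntegral.integral_symm (a := r) (b := δ/2) (f := f) (μ := volume)
    rw [hsymm]
    linarith

private lemma primitive_nonneg {δ : ℝ} {f : ℝ → ℝ} (hf : ContinuousOn f (Ioo 0 δ))
    (hr₀ : δ/2 ∈ Ioo (0:ℝ) δ)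
    (h₁ : ∀ t ∈ Ioo 0 δ, δ/2 ≤ t → 0 ≤ f t) (h₂ : ∀ t ∈ Ioo 0 δ, t ≤ δ/2 → f t ≤ 0)
    {r : ℝ} (hr : r ∈ Ioo 0 δ) : 0 ≤ ∫ t in (δ/2)..r, f t := by
  rcases le_total (δ/2) r with h | h
  · have hIcc : Icc (δ/2) r ⊆ Ioo 0 δ := by
      rw [← uIcc_of_le h]; exact ordConnected_Ioo.uIcc_subset hr₀ hr
    exact intervalIntegral.integral_nonneg h (fun t ht => h₁ t (hIcc ht) ht.1)
  · have hIcc : Icc r (δ/2) ⊆ Ioo 0 δ := by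
      rw [← uIcc_of_ge h]; exact ordConnected_Ioo.uIcc_subset hr₀ hr
    have h1 : (∫ t in r..(δ/2), f t) ≤ 0 := by
      have h2 : 0 ≤ ∫ t in r..(δ/2), -f t :=
        intervalIntegral.integral_nonneg h (fun t ht => neg_nonneg.2 (h₂ t (hIcc ht) ht.2))
    -- compute
      rw [intervalIntegral.integral_neg] at h2
      linarith
    have hsymm := intervalIntegral.integral_symm (a := r) (b := δ/2) (f := f) (μ := volume)
    rw [hsymm]
    linarith

private lemma div_fact_mono {M p q : ℝ} (k : ℕ) (hM : 0 ≤ M) (hpq : p ≤ q) :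
    M * p / k ! ≤ M * q / k ! := by
  have h : (0:ℝ) ≤ k ! := by positivity
  exact div_le_div_of_nonneg_right (mul_le_mul_of_nonneg_left hpq hM) h

private noncomputable def volIter (P Q : ℝ → ℝ) (r₀ : ℝ) : ℕ → ℝ → ℝ
  | 0 => fun _ => 1
  | (n+1) => fun r => ∫ s in r₀..r, P s * ∫ t in r₀..s, Q t * volIter P Q r₀ n t

private noncomputable def volD (P Q : ℝ → ℝ) (r₀ : ℝ) : ℕ → ℝ → ℝ
  | 0 => fun _ => 0
  | (n+1) => fun r => P r * ∫ t in r₀..r, Q t * volIter P Q r₀ n t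

private noncomputable def volC (A B D : ℝ) : ℕ → ℝ
  | 0 => 0
  | (m+1) => A * (B * (A*B)^m * D^(2*m+1)/(2*m+1)!)

private lemma volterra {δ : ℝ} (hδ : 0 < δ) {P Q : ℝ → ℝ}
    (hP : ContinuousOn P (Ioo 0 δ)) (hQ : ContinuousOn Q (Ioo 0 δ))
    (hP0 : ∀ r ∈ Ioo 0 δ, 0 ≤ P r) (hQ0 : ∀ r ∈ Ioo 0 δ, 0 ≤ Q r) :
    ∃ Φ G : ℝ → ℝ, (∀ r ∈ Ioo 0 δ, 1 ≤ Φ r) ∧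
      (∀ r ∈ Ioo 0 δ, HasDerivAt Φ (P r * G r) r) ∧
      (∀ r ∈ Ioo 0 δ, HasDerivAt G (Q r * Φ r) r) := by
  have hr₀ : δ/2 ∈ Ioo (0:ℝ) δ := ⟨by linarith, by linarith⟩
  -- the iterates
  let ph : ℕ → ℝ → ℝ := volIter P Q (δ/2)
  let I : ℕ → ℝ → ℝ := fun n r => ∫ t in (δ/2)..r, Q t * ph n t
  have hph0 : ∀ r, ph 0 r = 1 := fun _ => rfl
  have hphs : ∀ n r, ph (n+1) r = ∫ s in (δ/2)..r, P s * I n s := fun _ _ => rfl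
  -- basic invariant
  have inv : ∀ n, ContinuousOn (ph n) (Ioo 0 δ) ∧ (∀ r ∈ Ioo 0 δ, 0 ≤ ph n r) := by
    intro n
    induction n with
    | zero => exact ⟨continuousOn_const, fun r _ => by norm_num [hph0]⟩
    | succ n ih =>
      obtain ⟨hc, hpos⟩ := ih
      have hQph : ContinuousOn (fun t => Q t * ph n t) (Ioo 0 δ) := hQ.mul hc
      have hQph0 : ∀ t ∈ Ioo 0 δ, 0 ≤ Q t * ph n t :=
        fun t ht => mul_nonneg (hQ0 t ht) (hpos t ht)
      have hIsign := primitive_sign hQph hr₀ hQph0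
      have hIc : ContinuousOn (I n) (Ioo 0 δ) := fun r hr =>
        ((primitive_hasDerivAt hQph hr₀ hr).continuousAt).continuousWithinAt
      have hPI : ContinuousOn (fun s => P s * I n s) (Ioo 0 δ) := hP.mul hIc
      constructor
      · intro r hr
        exact ((primitive_hasDerivAt hPI hr₀ hr).continuousAt).continuousWithinAt
      · intro r hr
        refine primitive_nonneg hPI hr₀ ?_ ?_ hr
        · exact fun t ht h => mul_nonneg (hP0 t ht) (hIsign.1 t ht h)
        · intro t ht h
          have h3 : 0 ≤ P t * (-(I n t)) :=
            mul_nonneg (hP0 t ht) (neg_nonneg.2 (hIsign.2 t ht h))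
          rw [mul_neg] at h3; linarith
  have hIcont : ∀ n, ContinuousOn (I n) (Ioo 0 δ) := fun n r hr =>
    ((primitive_hasDerivAt (hQ.mul (inv n).1) hr₀ hr).continuousAt).continuousWithinAt
  have hIder : ∀ n, ∀ z ∈ Ioo 0 δ, HasDerivAt (I n) (Q z * ph n z) z :=
    fun n z hz => primitive_hasDerivAt (hQ.mul (inv n).1) hr₀ hz
  -- bounds on compact subintervals
  have bounds : ∀ a b : ℝ, 0 < a → a ≤ δ/2 → δ/2 ≤ b → b < δ →
      ∃ A B : ℝ, 0 ≤ A ∧ 0 ≤ B ∧ (∀ r ∈ Icc a b, |P r| ≤ A) ∧ (∀ r ∈ Icc a b, |Q r| ≤ B) ∧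
        ∀ n, ∀ r ∈ Icc a b, |ph n r| ≤ (A*B)^n * |r - δ/2|^(2*n) / (2*n)! ∧
          |I n r| ≤ B * (A*B)^n * |r - δ/2|^(2*n+1) / (2*n+1)! := by
    intro a b ha0 har hbr hbδ
    have hsub : Icc a b ⊆ Ioo 0 δ := Icc_subset_Ioo ha0 hbδ
    have hr₀ab : δ/2 ∈ Icc a b := ⟨har, hbr⟩
    obtain ⟨A₀, hA₀⟩ := isCompact_Icc.exists_bound_of_continuousOn (hP.mono hsub)
    obtain ⟨B₀, hB₀⟩ := isCompact_Icc.exists_bound_of_continuousOn (hQ.mono hsub)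
    refine ⟨max A₀ 0, max B₀ 0, le_max_right _ _, le_max_right _ _,
      fun r hr => (hA₀ r hr).trans (le_max_left _ _),
      fun r hr => (hB₀ r hr).trans (le_max_left _ _), ?_⟩
    set A := max A₀ 0 with hA
    set B := max B₀ 0 with hB
    have hA0 : 0 ≤ A := le_max_right _ _
    have hB0 : 0 ≤ B := le_max_right _ _
    have hPA : ∀ r ∈ Icc a b, |P r| ≤ A := fun r hr => (hA₀ r hr).trans (le_max_left _ _)
    have hQB : ∀ r ∈ Icc a b, |Q r| ≤ B := fun r hr => (hB₀ r hr).trans (le_max_left _ _)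
    have huIcc : ∀ r ∈ Icc a b, uIcc (δ/2) r ⊆ Icc a b :=
      fun r hr => ordConnected_Icc.uIcc_subset hr₀ab hr
    -- step from ph-bound to I-bound at the same level
    have Istep : ∀ n, (∀ r ∈ Icc a b, |ph n r| ≤ (A*B)^n * |r - δ/2|^(2*n) / (2*n)!) →
        ∀ r ∈ Icc a b, |I n r| ≤ B * (A*B)^n * |r - δ/2|^(2*n+1) / (2*n+1)! := by
      intro n hphb r hr
      have hM : 0 ≤ B * (A*B)^n := mul_nonneg hB0 (pow_nonneg (mul_nonneg hA0 hB0) n)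
      have := factorial_integral_bound (r₀ := δ/2) (r := r) (M := B * (A*B)^n) (k := 2*n)
        (f := fun t => Q t * ph n t)
        ((hQ.mul (inv n).1).mono ((huIcc r hr).trans hsub)) hM ?_
      · exact this
      · intro t ht
        have ht' : t ∈ Icc a b := huIcc r hr ht
        calc |Q t * ph n t| = |Q t| * |ph n t| := abs_mul _ _
          _ ≤ B * ((A*B)^n * |t - δ/2|^(2*n) / (2*n)!) :=
              mul_le_mul (hQB t ht') (hphb t ht') (abs_nonneg _) hB0
          _ = B * (A*B)^n * |t - δ/2|^(2*n) / (2*n)! := by ring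
    have phstep : ∀ n, (∀ r ∈ Icc a b, |I n r| ≤ B * (A*B)^n * |r - δ/2|^(2*n+1) / (2*n+1)!) →
        ∀ r ∈ Icc a b, |ph (n+1) r| ≤ (A*B)^(n+1) * |r - δ/2|^(2*(n+1)) / (2*(n+1))! := by
      intro n hIb r hr
      have hM : 0 ≤ A * (B * (A*B)^n) :=
        mul_nonneg hA0 (mul_nonneg hB0 (pow_nonneg (mul_nonneg hA0 hB0) n))
      have key := factorial_integral_bound (r₀ := δ/2) (r := r) (M := A * (B * (A*B)^n))
        (k := 2*n+1) (f := fun s => P s * I n s)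
        ((hP.mul (hIcont n)).mono ((huIcc r hr).trans hsub)) hM ?_
      · have e1 : 2*(n+1) = 2*n+1+1 := by ring
        have e2 : (A*B)^(n+1) = A * (B * (A*B)^n) := by ring
        rw [hphs, e1, e2]
        exact key
      · intro s hs
        have hs' : s ∈ Icc a b := huIcc r hr hs
        calc |P s * I n s| = |P s| * |I n s| := abs_mul _ _
          _ ≤ A * (B * (A*B)^n * |s - δ/2|^(2*n+1) / (2*n+1)!) :=
              mul_le_mul (hPA s hs') (hIb s hs') (abs_nonneg _) hA0
          _ = A * (B * (A*B)^n) * |s - δ/2|^(2*n+1) / (2*n+1)! := by ring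
    intro n
    induction n with
    | zero =>
      have hphb : ∀ r ∈ Icc a b, |ph 0 r| ≤ (A*B)^0 * |r - δ/2|^(2*0) / (2*0)! := by
        intro r hr
        simp [hph0]
      exact fun r hr => ⟨hphb r hr, Istep 0 hphb r hr⟩
    | succ n ih =>
      have hphb : ∀ r ∈ Icc a b, |ph (n+1) r| ≤ (A*B)^(n+1) * |r - δ/2|^(2*(n+1)) / (2*(n+1))! :=
        phstep n (fun r hr => (ih r hr).2)
      exact fun r hr => ⟨hphb r hr, Istep (n+1) hphb r hr⟩
  -- the series and its term-by-term derivatives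
  have hfac_pos : ∀ k:ℕ, (0:ℝ) < k ! := fun k => by exact_mod_cast k.factorial_pos
  have main : ∀ x ∈ Ioo 0 δ,
      HasDerivAt (fun z => ∑' n, ph n z) (P x * ∑' n, I n x) x ∧
      HasDerivAt (fun z => ∑' n, I n z) (Q x * ∑' n, ph n x) x ∧
      Summable (fun n => ph n x) := by
    intro x hx
    obtain ⟨hx0, hxδ⟩ := hx
    obtain ⟨a, b, ha0, har, hax, hbr, hxb, hbδ⟩ :
        ∃ a b : ℝ, 0 < a ∧ a < δ/2 ∧ a < x ∧ δ/2 < b ∧ x < b ∧ b < δ := by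
      have hmin0 : 0 < min x (δ/2) := lt_min hx0 hr₀.1
      have hmaxδ : max x (δ/2) < δ := max_lt hxδ hr₀.2
      have h1 : min x (δ/2) ≤ δ/2 := min_le_right _ _
      have h2 : min x (δ/2) ≤ x := min_le_left _ _
      have h3 : δ/2 ≤ max x (δ/2) := le_max_right _ _
      have h4 : x ≤ max x (δ/2) := le_max_left _ _
      exact ⟨min x (δ/2) / 2, (max x (δ/2) + δ) / 2, by linarith, by linarith, by linarith,
        by linarith, by linarith, by linarith⟩
    obtain ⟨A, B, hA0, hB0, hPA, hQB, hbd⟩ := bounds a b ha0 har.le hbr.le hbδ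
    obtain ⟨D, hD⟩ : ∃ D : ℝ, D = b - a := ⟨b - a, rfl⟩
    have hD0 : 0 ≤ D := by rw [hD]; linarith
    have hIccIoo : Ioo a b ⊆ Icc a b := Ioo_subset_Icc_self
    have hIooIoo : Ioo a b ⊆ Ioo 0 δ := fun z hz => ⟨lt_trans ha0 hz.1, lt_trans hz.2 hbδ⟩
    have habs : ∀ z ∈ Icc a b, |z - δ/2| ≤ D := by
      intro z hz
      refine abs_le.2 ⟨?_, ?_⟩
      · rw [hD]; have := hz.1; linarith
      · rw [hD]; have := hz.2; linarith
    have hr₀ab : δ/2 ∈ Ioo a b := ⟨har, hbr⟩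
    have hxab : x ∈ Ioo a b := ⟨hax, hxb⟩
    have hABn : ∀ n:ℕ, 0 ≤ (A*B)^n := fun n => pow_nonneg (mul_nonneg hA0 hB0) n
    have hABD : 0 ≤ A*B*D^2 := mul_nonneg (mul_nonneg hA0 hB0) (sq_nonneg D)
    -- pointwise summable bound for ph
    have hphb : ∀ n, ∀ z ∈ Icc a b, |ph n z| ≤ (A*B*D^2)^n / n ! := by
      intro n z hz
      have h1 := (hbd n z hz).1
      have h2 : (A*B)^n * |z - δ/2|^(2*n) / (2*n)! ≤ (A*B)^n * D^(2*n) / (2*n)! :=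
        div_fact_mono _ (hABn n) (pow_le_pow_left₀ (abs_nonneg _) (habs z hz) _)
      have e3 : (A*B)^n * D^(2*n) = (A*B*D^2)^n := by
        rw [pow_mul, ← mul_pow]
      have h4 : (A*B)^n * D^(2*n) / (2*n)! ≤ (A*B*D^2)^n / n ! := by
        rw [e3]
        exact div_le_div₀ (pow_nonneg hABD n) le_rfl (hfac_pos n)
          (by exact_mod_cast Nat.factorial_le (by omega))
      linarith
    -- derivative family for ph
    let d : ℕ → ℝ → ℝ := volD P Q (δ/2)
    have hder : ∀ n, ∀ z ∈ Ioo 0 δ, HasDerivAt (ph n) (d n z) z := by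
      intro n z hz
      cases n with
      | zero => exact hasDerivAt_const z 1
      | succ m => exact primitive_hasDerivAt (hP.mul (hIcont m)) hr₀ hz
    let c : ℕ → ℝ := volC A B D
    have hc : ∀ n, ∀ z ∈ Ioo a b, ‖d n z‖ ≤ c n := by
      intro n z hz
      cases n with
      | zero =>
        show ‖(0:ℝ)‖ ≤ (0:ℝ)
        simp
      | succ m =>
        have hz' : z ∈ Icc a b := hIccIoo hz
        show ‖P z * I m z‖ ≤ A * (B * (A*B)^m * D^(2*m+1)/(2*m+1)!)
        rw [Real.norm_eq_abs, abs_mul]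
        have h1 : |I m z| ≤ B * (A*B)^m * D^(2*m+1)/(2*m+1)! := by
          refine le_trans (hbd m z hz').2 ?_
          exact div_fact_mono _ (mul_nonneg hB0 (hABn m))
            (pow_le_pow_left₀ (abs_nonneg _) (habs z hz') _)
        exact mul_le_mul (hPA z hz') h1 (abs_nonneg _) hA0
    have hcsum : Summable c := by
      rw [← summable_nat_add_iff 1]
      refine Summable.of_nonneg_of_le (fun m => ?_) (fun m => ?_)
        ((Real.summable_pow_div_factorial (A*B*D^2)).mul_left (A*B*D))
      · show (0:ℝ) ≤ A * (B * (A*B)^m * D^(2*m+1)/(2*m+1)!)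
        apply mul_nonneg hA0
        apply div_nonneg _ (hfac_pos _).le
        exact mul_nonneg (mul_nonneg hB0 (hABn m)) (pow_nonneg hD0 _)
      · show A * (B * (A*B)^m * D^(2*m+1)/(2*m+1)!) ≤ (A*B*D) * ((A*B*D^2)^m / m !)
        have e : A * (B * (A*B)^m * D^(2*m+1)/(2*m+1)!) = (A*B*D) * (A*B*D^2)^m / (2*m+1)! := by
          have e1 : D^(2*m+1) = (D^2)^m * D := by rw [pow_succ, ← pow_mul]
          rw [e1]; ring
        rw [e, ← mul_div_assoc]
        exact div_le_div₀ (mul_nonneg (mul_nonneg (mul_nonneg hA0 hB0) hD0) (pow_nonneg hABD m))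
          le_rfl (hfac_pos m) (by exact_mod_cast Nat.factorial_le (by omega))
    have hsum0 : Summable (fun n => ph n (δ/2)) := by
      apply summable_of_ne_finset_zero (s := {0})
      intro n hn
      match n, hn with
      | (m+1), _ => exact intervalIntegral.integral_same
    have HPh : HasDerivAt (fun z => ∑' n, ph n z) (∑' n, d n x) x :=
      hasDerivAt_tsum_of_isPreconnected hcsum isOpen_Ioo isPreconnected_Ioo
        (fun n z hz => hder n z (hIooIoo hz)) hc hr₀ab hsum0 hxab
    have hdsumx : Summable (fun n => d n x) :=
      Summable.of_norm_bounded hcsum (fun n => hc n x hxab)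
    have htsum_d : ∑' n, d n x = P x * ∑' n, I n x := by
      rw [hdsumx.tsum_eq_zero_add]
      have e1 : (fun n => d (n+1) x) = fun n => P x * I n x := rfl
      have e2 : d 0 x = 0 := rfl
      rw [e1, e2, tsum_mul_left, zero_add]
    rw [htsum_d] at HPh
    -- derivative of G
    have hc' : ∀ n, ∀ z ∈ Ioo a b, ‖Q z * ph n z‖ ≤ B * ((A*B*D^2)^n / n !) := by
      intro n z hz
      have hz' := hIccIoo hz
      rw [Real.norm_eq_abs, abs_mul]
      exact mul_le_mul (hQB z hz') (hphb n z hz') (abs_nonneg _) hB0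
    have hc'sum : Summable (fun n => B * ((A*B*D^2)^n / n !)) :=
      (Real.summable_pow_div_factorial _).mul_left B
    have hsumI0 : Summable (fun n => I n (δ/2)) :=
      summable_zero.congr (fun n => (intervalIntegral.integral_same).symm)
    have HG : HasDerivAt (fun z => ∑' n, I n z) (∑' n, Q x * ph n x) x :=
      hasDerivAt_tsum_of_isPreconnected hc'sum isOpen_Ioo isPreconnected_Ioo
        (fun n z hz => hIder n z (hIooIoo hz)) hc' hr₀ab hsumI0 hxab
    rw [tsum_mul_left] at HG
    have hphsum : Summable (fun n => ph n x) := by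
      refine Summable.of_norm_bounded (Real.summable_pow_div_factorial (A*B*D^2)) ?_
      intro n
      rw [Real.norm_eq_abs]
      refine (hphb n x (hIccIoo hxab)).trans ?_
      exact div_le_div₀ (pow_nonneg hABD n) le_rfl (hfac_pos n) le_rfl
    exact ⟨HPh, HG, hphsum⟩
  refine ⟨fun r => ∑' n, ph n r, fun r => ∑' n, I n r, ?_,
    fun r hr => (main r hr).1, fun r hr => (main r hr).2.1⟩
  intro r hr
  have hs := (main r hr).2.2
  show (1:ℝ) ≤ ∑' n, ph n r
  rw [hs.tsum_eq_zero_add]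
  have h0 : ph 0 r = 1 := rfl
  have hnn : 0 ≤ ∑' n, ph (n+1) r := tsum_nonneg (fun n => (inv (n+1)).2 r hr)
  rw [h0]
  linarith

end Helpers

/-- Lemma 4.5 (consequence): `y'' + y'/r + v y = 0` has a strictly positive C²
supersolution on `(0,δ)` iff it has a strictly positive C² solution on `(0,δ)`. -/
theorem supersolution_iff_solution
    (δ : ℝ) (hδ : 0 < δ) (v : ℝ → ℝ)
    (hv : ContinuousOn v (Ioo 0 δ)) (hvnn : ∀ r ∈ Ioo 0 δ, 0 ≤ v r) :
    (∃ y : ℝ → ℝ, ContDiffOn ℝ 2 y (Ioo 0 δ) ∧ (∀ r ∈ Ioo 0 δ, 0 < y r) ∧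
      ∀ r ∈ Ioo 0 δ, deriv (deriv y) r + deriv y r / r + v r * y r ≤ 0) ↔
    (∃ y : ℝ → ℝ, ContDiffOn ℝ 2 y (Ioo 0 δ) ∧ (∀ r ∈ Ioo 0 δ, 0 < y r) ∧
      ∀ r ∈ Ioo 0 δ, deriv (deriv y) r + deriv y r / r + v r * y r = 0) := by
  constructor
  · rintro ⟨u, hu, hupos, hineq⟩
    have hio : IsOpen (Ioo (0:ℝ) δ) := isOpen_Ioo
    have hud : ∀ r ∈ Ioo 0 δ, HasDerivAt u (deriv u r) r := fun r hr =>
      ((hu.differentiableOn (by norm_num)).differentiableAt (hio.mem_nhds hr)).hasDerivAt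
    have hu1cd : ContDiffOn ℝ 1 (deriv u) (Ioo 0 δ) := hu.deriv_of_isOpen hio (by norm_num)
    have hu1d : ∀ r ∈ Ioo 0 δ, HasDerivAt (deriv u) (deriv (deriv u) r) r := fun r hr =>
      ((hu1cd.differentiableOn one_ne_zero).differentiableAt (hio.mem_nhds hr)).hasDerivAt
    have hu2c : ContinuousOn (deriv (deriv u)) (Ioo 0 δ) :=
      hu1cd.continuousOn_deriv_of_isOpen hio le_rfl
    have hu1c : ContinuousOn (deriv u) (Ioo 0 δ) := hu1cd.continuousOn
    have huc : ContinuousOn u (Ioo 0 δ) := hu.continuousOn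
    have hune : ∀ r ∈ Ioo 0 δ, r * u r ^ 2 ≠ 0 := fun r hr =>
      ne_of_gt (mul_pos hr.1 (pow_pos (hupos r hr) 2))
    -- P and Q
    have hPc : ContinuousOn (fun r => (r * u r ^ 2)⁻¹) (Ioo 0 δ) :=
      (continuousOn_id.mul (huc.pow 2)).inv₀ hune
    have hP0 : ∀ r ∈ Ioo 0 δ, 0 ≤ (r * u r ^ 2)⁻¹ := fun r hr =>
      inv_nonneg.2 (le_of_lt (mul_pos hr.1 (pow_pos (hupos r hr) 2)))
    have hQc : ContinuousOn
        (fun r => r * u r * (-(deriv (deriv u) r + deriv u r / r + v r * u r))) (Ioo 0 δ) := by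
      apply (continuousOn_id.mul huc).mul
      apply ContinuousOn.neg
      exact (hu2c.add (hu1c.div continuousOn_id (fun r hr => ne_of_gt hr.1))).add (hv.mul huc)
    have hQ0 : ∀ r ∈ Ioo 0 δ,
        0 ≤ r * u r * (-(deriv (deriv u) r + deriv u r / r + v r * u r)) := fun r hr =>
      mul_nonneg (mul_nonneg hr.1.le (hupos r hr).le) (neg_nonneg.2 (hineq r hr))
    obtain ⟨Φ, G, hΦ1, hΦd, hGd⟩ := volterra hδ hPc hQc hP0 hQ0
    have hΦc : ContinuousOn Φ (Ioo 0 δ) := fun r hr =>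
      (hΦd r hr).continuousAt.continuousWithinAt
    have hGc : ContinuousOn G (Ioo 0 δ) := fun r hr =>
      (hGd r hr).continuousAt.continuousWithinAt
    -- regularity of Φ
    have hG1 : ContDiffOn ℝ 1 G (Ioo 0 δ) := by
      rw [show (1 : WithTop ℕ∞) = 0 + 1 from rfl, contDiffOn_succ_iff_deriv_of_isOpen hio]
      refine ⟨fun r hr => (hGd r hr).differentiableAt.differentiableWithinAt, by simp, ?_⟩
      rw [contDiffOn_zero]
      exact (hQc.mul hΦc).congr (fun r hr => (hGd r hr).deriv)
    have hP1 : ContDiffOn ℝ 1 (fun r => (r * u r ^ 2)⁻¹) (Ioo 0 δ) :=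
      (contDiffOn_id.mul ((hu.of_le one_le_two).pow 2)).inv hune
    have hΦ2 : ContDiffOn ℝ 2 Φ (Ioo 0 δ) := by
      rw [show (2 : WithTop ℕ∞) = 1 + 1 from rfl, contDiffOn_succ_iff_deriv_of_isOpen hio]
      refine ⟨fun r hr => (hΦd r hr).differentiableAt.differentiableWithinAt, by simp, ?_⟩
      exact (hP1.mul hG1).congr (fun r hr => (hΦd r hr).deriv)
    refine ⟨fun r => u r * Φ r, hu.mul hΦ2, fun r hr =>
      mul_pos (hupos r hr) (lt_of_lt_of_le one_pos (hΦ1 r hr)), ?_⟩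
    -- the equation
    intro r hr
    have hyd : ∀ s ∈ Ioo 0 δ, HasDerivAt (fun t => u t * Φ t)
        (deriv u s * Φ s + u s * ((s * u s ^ 2)⁻¹ * G s)) s :=
      fun s hs => (hud s hs).mul (hΦd s hs)
    have hyd' : EqOn (deriv (fun t => u t * Φ t))
        (fun s => deriv u s * Φ s + u s * ((s * u s ^ 2)⁻¹ * G s)) (Ioo 0 δ) :=
      fun s hs => (hyd s hs).deriv
    have hPdr : HasDerivAt (fun s => (s * u s ^ 2)⁻¹)
        (-(1 * u r ^ 2 + r * (2 * u r ^ 1 * deriv u r)) / (r * u r ^ 2) ^ 2) r :=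
      ((hasDerivAt_id r).mul ((hud r hr).pow 2)).inv (hune r hr)
    have hEd : HasDerivAt (fun s => deriv u s * Φ s + u s * ((s * u s ^ 2)⁻¹ * G s))
        ((deriv (deriv u) r * Φ r + deriv u r * ((r * u r ^ 2)⁻¹ * G r)) +
          (deriv u r * ((r * u r ^ 2)⁻¹ * G r) + u r *
            ((-(1 * u r ^ 2 + r * (2 * u r ^ 1 * deriv u r)) / (r * u r ^ 2) ^ 2) * G r +
              (r * u r ^ 2)⁻¹ * (r * u r * (-(deriv (deriv u) r + deriv u r / r + v r * u r)) * Φ r)))) r :=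
      ((hu1d r hr).mul (hΦd r hr)).add ((hud r hr).mul (hPdr.mul (hGd r hr)))
    have h2 : deriv (deriv (fun t => u t * Φ t)) r =
        deriv (fun s => deriv u s * Φ s + u s * ((s * u s ^ 2)⁻¹ * G s)) r :=
      Filter.EventuallyEq.deriv_eq (Filter.eventuallyEq_of_mem (hio.mem_nhds hr) hyd')
    rw [h2, hEd.deriv, hyd' hr]
    have hr0 : r ≠ 0 := ne_of_gt hr.1
    have hur0 : u r ≠ 0 := ne_of_gt (hupos r hr)
    field_simp
    ring
  · rintro ⟨y, h1, h2, h3⟩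
    exact ⟨y, h1, h2, fun r hr => le_of_eq (h3 r hr)⟩
end

section
/- Let Ω = B_R ⊂ ℝⁿ (n ≥ 3) be the ball of radius R, V(x) = v(|x|) with v ≥ 0 continuous on (0,R), and suppose φ ∈ C²((0,R)) is strictly positive with v(r) ≤ −(φ'(r) + r φ''(r))/(r φ(r)) for 0 < r < R, together with liminf_{r→0} r φ'(r)/φ(r) ≥ 0 and limsup_{r→R} φ'(r)/φ(r) < ∞. Then for every radial u ∈ C²_c(B_R), ∫_Ω |∇u|² dx ≥ ((n−2)/2)² ∫_Ω u²/|x|² dx + ∫_Ω V(|x|) u² dx. -/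
open MeasureTheory Filter Set Topology

lemma rphi_nonpos (R : ℝ) (φ : ℝ → ℝ) (hφC2 : ContDiffOn ℝ 2 φ (Ioo 0 R))
    (hφpos : ∀ r ∈ Ioo 0 R, 0 < φ r)
    (hF' : ∀ r ∈ Ioo 0 R, deriv φ r + r * deriv (deriv φ) r ≤ 0) :
    ∀ r ∈ Ioo 0 R, r * deriv φ r ≤ 0 := by
  by_contra h
  push_neg at h
  obtain ⟨r₁, hr₁, hc⟩ := h
  set c := r₁ * deriv φ r₁ with hcdef
  have hφ' : ContDiffOn ℝ 1 (deriv φ) (Ioo 0 R) :=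
    hφC2.deriv_of_isOpen isOpen_Ioo (by norm_num)
  have hdφ : ∀ r ∈ Ioo 0 R, HasDerivAt φ (deriv φ r) r := fun r hr =>
    (((hφC2.differentiableOn (by norm_num)) r hr).differentiableAt
      (isOpen_Ioo.mem_nhds hr)).hasDerivAt
  have hd2 : ∀ r ∈ Ioo 0 R, HasDerivAt (deriv φ) (deriv (deriv φ) r) r := fun r hr =>
    (((hφ'.differentiableOn (by norm_num)) r hr).differentiableAt
      (isOpen_Ioo.mem_nhds hr)).hasDerivAt
  -- F := fun r => r * deriv φ r is antitone on Ioo 0 R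
  have hFder : ∀ r ∈ Ioo 0 R, HasDerivAt (fun s => s * deriv φ s)
      (deriv φ r + r * deriv (deriv φ) r) r := by
    intro r hr
    have := (hasDerivAt_id r).mul (hd2 r hr)
    simp only [id_eq] at this
    exact this.congr_deriv (by ring)
  have hFanti : AntitoneOn (fun s => s * deriv φ s) (Ioo 0 R) := by
    apply antitoneOn_of_deriv_nonpos (convex_Ioo 0 R)
    · exact fun r hr => ((hFder r hr).continuousAt).continuousWithinAt
    · intro r hr
      rw [interior_Ioo] at hr
      exact (hFder r hr).differentiableAt.differentiableWithinAt
    · intro r hr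
      rw [interior_Ioo] at hr
      rw [(hFder r hr).deriv]
      exact hF' r hr
  have hcpos : 0 < c := hc
  -- deriv φ r ≥ c / r on Ioo 0 r₁
  have hlow : ∀ r ∈ Ioo 0 r₁, c / r ≤ deriv φ r := by
    intro r hr
    have hrR : r ∈ Ioo 0 R := ⟨hr.1, hr.2.trans hr₁.2⟩
    have h2 := hFanti hrR hr₁ hr.2.le
    simp only at h2
    rw [div_le_iff₀ hr.1, mul_comm]
    exact h2
  -- ψ := φ - c * log is monotone on Ioo 0 r₁
  have hψmono : MonotoneOn (fun s => φ s - c * Real.log s) (Ioo 0 r₁) := by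
    apply monotoneOn_of_deriv_nonneg (convex_Ioo 0 r₁)
    · intro r hr
      have hrR : r ∈ Ioo 0 R := ⟨hr.1, hr.2.trans hr₁.2⟩
      exact ((hdφ r hrR).sub ((Real.hasDerivAt_log hr.1.ne').const_mul c)).continuousAt.continuousWithinAt
    · intro r hr
      rw [interior_Ioo] at hr
      have hrR : r ∈ Ioo 0 R := ⟨hr.1, hr.2.trans hr₁.2⟩
      exact ((hdφ r hrR).sub ((Real.hasDerivAt_log hr.1.ne').const_mul c)).differentiableAt.differentiableWithinAt
    · intro r hr
      rw [interior_Ioo] at hr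
      have hrR : r ∈ Ioo 0 R := ⟨hr.1, hr.2.trans hr₁.2⟩
      rw [show (fun s => φ s - c * Real.log s) = φ - fun y => c * Real.log y from rfl,
        ((hdφ r hrR).sub ((Real.hasDerivAt_log hr.1.ne').const_mul c)).deriv]
      have := hlow r hr
      have : c / r ≤ deriv φ r := this
      have hcr : c * r⁻¹ = c / r := by ring
      linarith [this, hcr ▸ this]
  set K := φ (r₁/2) - c * Real.log (r₁/2) with hK
  set ε := min (r₁/4) (Real.exp (-(K+1)/c)) with hε
  have hεpos : 0 < ε := lt_min (by linarith [hr₁.1]) (Real.exp_pos _)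
  have hεlt : ε < r₁/2 := lt_of_le_of_lt (min_le_left _ _) (by linarith [hr₁.1])
  have hεIoo : ε ∈ Ioo (0:ℝ) r₁ := ⟨hεpos, by linarith [hr₁.1]⟩
  have hhalf : r₁/2 ∈ Ioo (0:ℝ) r₁ := ⟨by linarith [hr₁.1], by linarith [hr₁.1]⟩
  have hmono := hψmono hεIoo hhalf hεlt.le
  -- φ ε ≤ K + c * log ε ≤ K - (K+1) = -1
  have hlog : Real.log ε ≤ -(K+1)/c := by
    calc Real.log ε ≤ Real.log (Real.exp (-(K+1)/c)) :=
          Real.log_le_log hεpos (min_le_right _ _)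
      _ = -(K+1)/c := Real.log_exp _
  have hclog : c * Real.log ε ≤ -(K+1) := by
    have := mul_le_mul_of_nonneg_left hlog hcpos.le
    calc c * Real.log ε ≤ c * (-(K+1)/c) := this
      _ = -(K+1) := by field_simp
  have hφε : φ ε ≤ -1 := by
    have : φ ε - c * Real.log ε ≤ K := hmono
    linarith
  have := hφpos ε ⟨hεpos, hεIoo.2.trans hr₁.2⟩
  linarith


lemma core1d (m : ℕ) (R R' r₀ : ℝ) (hr₀ : 0 < r₀) (hr₀R' : r₀ < R') (hR'R : R' < R)
    (v : ℝ → ℝ) (hv : ContinuousOn v (Ioo 0 R)) (hvnn : ∀ r ∈ Ioo 0 R, 0 ≤ v r)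
    (φ : ℝ → ℝ) (hφC2 : ContDiffOn ℝ 2 φ (Ioo 0 R)) (hφpos : ∀ r ∈ Ioo 0 R, 0 < φ r)
    (hVφ : ∀ r ∈ Ioo 0 R, v r ≤ -((deriv φ r + r * deriv (deriv φ) r) / (r * φ r)))
    (f : ℝ → ℝ) (hf : ContDiff ℝ 2 f) (hf0 : ∀ r, r₀ < r → f r = 0) :
    ((((m:ℝ)+1)/2)^2 * (∫ r in Ioo (0:ℝ) R', r ^ m * (f r)^2)
      + ∫ r in Ioo (0:ℝ) R', r ^ (m+2) * (v r * (f r)^2)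
    ≤ ∫ r in Ioo (0:ℝ) R', r ^ (m+2) * (deriv f r)^2) := by
  have hR'pos : 0 < R' := hr₀.trans hr₀R'
  set p : ℝ := ((m:ℝ)+1)/2 with hp
  have hppos : 0 < p := by positivity
  set AA : ℝ → ℝ := fun r => r ^ (m+2) * (deriv f r)^2 with hAA
  set BB : ℝ → ℝ := fun r => r ^ m * (f r)^2 with hBB
  set A : ℝ → ℝ := fun r => AA r - p^2 * BB r with hA
  set Vst : ℝ → ℝ := fun r => r ^ (m+2) * (v r * (f r)^2) with hVst
  have hfc : Continuous f := hf.continuous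
  have hf'c : Continuous (deriv f) := hf.continuous_deriv one_le_two
  have hfd : ∀ r : ℝ, HasDerivAt f (deriv f r) r :=
    fun r => (hf.differentiable two_ne_zero r).hasDerivAt
  have hAAc : Continuous AA := (continuous_pow _).mul (hf'c.pow 2)
  have hBBc : Continuous BB := (continuous_pow _).mul (hfc.pow 2)
  have hAc : Continuous A := hAAc.sub (continuous_const.mul hBBc)
  have hAAint : IntegrableOn AA (Ioo 0 R') := by
    exact ((hAAc.continuousOn).integrableOn_compact isCompact_Icc (μ := volume)
      (K := Icc 0 R')).mono_set Ioo_subset_Icc_self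
  have hBBint : IntegrableOn BB (Ioo 0 R') := by
    exact ((hBBc.continuousOn).integrableOn_compact isCompact_Icc (μ := volume)
      (K := Icc 0 R')).mono_set Ioo_subset_Icc_self
  have hAint : IntegrableOn A (Ioo 0 R') := hAAint.sub (hBBint.const_mul _)
  -- φ facts
  have hφ' : ContDiffOn ℝ 1 (deriv φ) (Ioo 0 R) :=
    hφC2.deriv_of_isOpen isOpen_Ioo (by norm_num)
  have hφc : ContinuousOn φ (Ioo 0 R) := hφC2.continuousOn
  have hφ'c : ContinuousOn (deriv φ) (Ioo 0 R) := hφ'.continuousOn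
  have hφ''c : ContinuousOn (deriv (deriv φ)) (Ioo 0 R) :=
    (hφ'.deriv_of_isOpen (m := 0) isOpen_Ioo (by norm_num)).continuousOn
  have hdφ : ∀ r ∈ Ioo 0 R, HasDerivAt φ (deriv φ r) r := fun r hr =>
    (((hφC2.differentiableOn (by norm_num)) r hr).differentiableAt
      (isOpen_Ioo.mem_nhds hr)).hasDerivAt
  have hd2 : ∀ r ∈ Ioo 0 R, HasDerivAt (deriv φ) (deriv (deriv φ) r) r := fun r hr =>
    (((hφ'.differentiableOn (by norm_num)) r hr).differentiableAt
      (isOpen_Ioo.mem_nhds hr)).hasDerivAt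
  -- r * φ' ≤ 0
  have hFneg : ∀ r ∈ Ioo 0 R, r * deriv φ r ≤ 0 := by
    apply rphi_nonpos R φ hφC2 hφpos
    intro r hr
    have h0 := hvnn r hr
    have h1 := hVφ r hr
    have hrc : 0 < r * φ r := mul_pos hr.1 (hφpos r hr)
    have hdiv : (deriv φ r + r * deriv (deriv φ) r) / (r * φ r) ≤ 0 := by linarith
    have : deriv φ r + r * deriv (deriv φ) r
        = ((deriv φ r + r * deriv (deriv φ) r) / (r * φ r)) * (r * φ r) := by
      exact (div_mul_cancel₀ _ hrc.ne').symm
    rw [this]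
    exact mul_nonpos_of_nonpos_of_nonneg hdiv hrc.le
  -- the potential-free part of the derivative of W
  set W : ℝ → ℝ := fun s => ((f s)^2 * s^(m+1)) * (s * deriv φ s / φ s - p) with hW
  set E : ℝ → ℝ := fun r =>
      (2 * f r * deriv f r * r^(m+1) + (f r)^2 * (((m:ℝ)+1) * r^m)) * (r * deriv φ r / φ r - p)
      + ((f r)^2 * r^(m+1)) *
        (((1 * deriv φ r + r * deriv (deriv φ) r) * φ r - r * deriv φ r * deriv φ r) / (φ r)^2)
    with hE
  have hWd : ∀ r ∈ Ioo 0 R, HasDerivAt W (E r) r := by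
    intro r hr
    have h1 : HasDerivAt (fun s => (f s)^2 * s^(m+1))
        (2 * f r * deriv f r * r^(m+1) + (f r)^2 * (((m:ℝ)+1) * r^m)) r := by
      have := ((hfd r).pow 2).mul (hasDerivAt_pow (m+1) r)
      refine this.congr_deriv ?_
      push_cast [Pi.pow_apply]
      ring_nf
    have h2 : HasDerivAt (fun s => s * deriv φ s / φ s - p)
        (((1 * deriv φ r + r * deriv (deriv φ) r) * φ r - r * deriv φ r * deriv φ r) / (φ r)^2)
        r := by
      have := (((hasDerivAt_id r).mul (hd2 r hr)).div (hdφ r hr) (hφpos r hr).ne').sub_const p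
      refine this.congr_deriv ?_
      all_goals simp [id_eq]
    exact h1.mul h2
  -- pointwise inequality
  have hE_le : ∀ r ∈ Ioo 0 R, E r ≤ A r - Vst r := by
    intro r hr
    simp only [hE, hA, hAA, hBB, hVst, hp]
    have hr0 : 0 < r := hr.1
    have hc0 : 0 < φ r := hφpos r hr
    have hVb : r ^ (m+2) * (v r * (f r)^2) ≤ -((deriv φ r + r * deriv (deriv φ) r) * r^(m+1) * (f r)^2 / φ r) := by
      have h := hVφ r hr
      have hmul := mul_le_mul_of_nonneg_right h
        (show (0:ℝ) ≤ r^(m+2) * (f r)^2 by positivity)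
      calc r ^ (m+2) * (v r * (f r)^2) = v r * (r^(m+2) * (f r)^2) := by ring
        _ ≤ -((deriv φ r + r * deriv (deriv φ) r) / (r * φ r)) * (r^(m+2) * (f r)^2) := hmul
        _ = -((deriv φ r + r * deriv (deriv φ) r) * r^(m+1) * (f r)^2 / φ r) := by
            field_simp
            ring
    have key : (r ^ (m+2) * (deriv f r)^2 - (((m:ℝ)+1)/2)^2 * (r^m * (f r)^2))
          + (deriv φ r + r * deriv (deriv φ) r) * r^(m+1) * (f r)^2 / φ r
        - ((2 * f r * deriv f r * r^(m+1) + (f r)^2 * (((m:ℝ)+1) * r^m)) * (r * deriv φ r / φ r - (((m:ℝ)+1)/2))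
          + ((f r)^2 * r^(m+1)) *
            (((1 * deriv φ r + r * deriv (deriv φ) r) * φ r - r * deriv φ r * deriv φ r) / (φ r)^2))
        = r^m * (r * deriv f r - r * f r * deriv φ r / φ r + (((m:ℝ)+1)/2) * f r)^2 := by
      field_simp
      ring
    have hsq : 0 ≤ r^m * (r * deriv f r - r * f r * deriv φ r / φ r + (((m:ℝ)+1)/2) * f r)^2 := by
      positivity
    linarith only [key, hVb, hsq]
  -- vanishing of f beyond r₀
  have hdf0 : ∀ r, r₀ < r → deriv f r = 0 := by
    intro r hrr
    have hev : f =ᶠ[nhds r] (fun _ => (0:ℝ)) :=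
      eventually_of_mem (isOpen_Ioi.mem_nhds hrr) (fun x hx => hf0 x hx)
    rw [hev.deriv_eq, deriv_const]
  -- step (6): uniform bound on truncated integrals
  have hVstc : ContinuousOn Vst (Ioo 0 R) :=
    ((continuous_pow _).continuousOn).mul (hv.mul ((hfc.pow 2).continuousOn))
  have hstep : ∀ ε ∈ Ioo (0:ℝ) R', (∫ r in Ioo ε R', Vst r) ≤ ∫ r in Ioo ε R', A r := by
    intro ε hε
    have hεR' : ε ≤ R' := hε.2.le
    have hsub : Icc ε R' ⊆ Ioo 0 R := fun x hx =>
      ⟨lt_of_lt_of_le hε.1 hx.1, lt_of_le_of_lt hx.2 hR'R⟩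
    have hsub' : uIcc ε R' ⊆ Ioo 0 R := by rw [uIcc_of_le hεR']; exact hsub
    have hEc : ContinuousOn E (Ioo 0 R) := by
      apply ContinuousOn.add
      · apply ContinuousOn.mul
        · apply Continuous.continuousOn
          fun_prop
        · exact ((continuousOn_id.mul hφ'c).div hφc (fun r hr => (hφpos r hr).ne')).sub
            continuousOn_const
      · apply ContinuousOn.mul
        · apply Continuous.continuousOn; fun_prop
        · apply ContinuousOn.div
          · exact (((continuousOn_const.mul hφ'c).add
              (continuousOn_id.mul hφ''c)).mul hφc).sub
              ((continuousOn_id.mul hφ'c).mul hφ'c)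
          · exact hφc.pow 2
          · exact fun r hr => pow_ne_zero _ (hφpos r hr).ne'
    have hEint : IntervalIntegrable E volume ε R' :=
      (hEc.mono hsub').intervalIntegrable
    have hAVc : ContinuousOn (fun r => A r - Vst r) (Ioo 0 R) :=
      (hAc.continuousOn).sub hVstc
    have hAVint : IntervalIntegrable (fun r => A r - Vst r) volume ε R' :=
      ((hAVc.mono hsub')).intervalIntegrable
    have hAint' : IntervalIntegrable A volume ε R' :=
      (hAc.continuousOn.mono hsub').intervalIntegrable
    have hVstint : IntervalIntegrable Vst volume ε R' :=
      ((hVstc.mono hsub')).intervalIntegrable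
    have hFTC : ∫ x in ε..R', E x = W R' - W ε :=
      intervalIntegral.integral_eq_sub_of_hasDerivAt
        (fun x hx => hWd x (hsub' hx)) hEint
    have hWR' : W R' = 0 := by
      rw [hW]; simp [hf0 R' hr₀R']
    have hWε : W ε ≤ 0 := by
      have hεIoo : ε ∈ Ioo 0 R := ⟨hε.1, hε.2.trans hR'R⟩
      have h1 : ε * deriv φ ε / φ ε ≤ 0 :=
        div_nonpos_of_nonpos_of_nonneg (hFneg ε hεIoo) (hφpos ε hεIoo).le
      show (f ε)^2 * ε^(m+1) * (ε * deriv φ ε / φ ε - p) ≤ 0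
      apply mul_nonpos_of_nonneg_of_nonpos
      · exact mul_nonneg (sq_nonneg _) (pow_nonneg hε.1.le _)
      · linarith
    have hmono : ∫ x in ε..R', E x ≤ ∫ x in ε..R', (A x - Vst x) :=
      intervalIntegral.integral_mono_on hεR' hEint hAVint
        (fun x hx => hE_le x (hsub hx))
    have hsplit : ∫ x in ε..R', (A x - Vst x) = (∫ x in ε..R', A x) - ∫ x in ε..R', Vst x :=
      intervalIntegral.integral_sub hAint' hVstint
    have h0le : (0:ℝ) ≤ ∫ x in ε..R', E x := by
      rw [hFTC, hWR']; linarith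
    have hfin : (∫ x in ε..R', Vst x) ≤ ∫ x in ε..R', A x := by linarith
    rw [intervalIntegral.integral_of_le hεR', intervalIntegral.integral_of_le hεR',
      integral_Ioc_eq_integral_Ioo, integral_Ioc_eq_integral_Ioo] at hfin
    exact hfin
  -- step (7): limit ε → 0
  set S : ℕ → Set ℝ := fun k => Ioo (R'/(k+2)) R' with hS
  have hek : ∀ k : ℕ, R'/((k:ℝ)+2) ∈ Ioo (0:ℝ) R' := by
    intro k
    constructor
    · positivity
    · rw [div_lt_iff₀ (by positivity)]
      nlinarith [Nat.cast_nonneg (α := ℝ) k]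
  have hSsub : ∀ k, S k ⊆ Ioo 0 R' := fun k x hx => ⟨(hek k).1.trans hx.1, hx.2⟩
  have hScover : AECover (volume.restrict (Ioo (0:ℝ) R')) atTop S := by
    constructor
    · filter_upwards [ae_restrict_mem measurableSet_Ioo] with x hx
      have h2 : Tendsto (fun k : ℕ => ((k:ℝ)+2)) atTop atTop :=
        tendsto_atTop_add_const_right atTop 2 tendsto_natCast_atTop_atTop
      have h1 : Tendsto (fun k : ℕ => R'/((k:ℝ)+2)) atTop (𝓝 0) :=
        Tendsto.div_atTop tendsto_const_nhds h2
      filter_upwards [h1.eventually_lt_const hx.1] with k hk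
      exact ⟨hk, hx.2⟩
    · exact fun k => measurableSet_Ioo
  have hrwV : ∀ (g : ℝ → ℝ) (k : ℕ), (∫ x in S k, g x ∂(volume.restrict (Ioo (0:ℝ) R')))
      = ∫ x in S k, g x := by
    intro g k
    rw [Measure.restrict_restrict measurableSet_Ioo, inter_eq_left.mpr (hSsub k)]
  have hVstnn : ∀ x ∈ Ioo (0:ℝ) R', 0 ≤ Vst x := by
    intro x hx
    have hxR : x ∈ Ioo 0 R := ⟨hx.1, hx.2.trans hR'R⟩
    have h9 := hvnn x hxR
    show 0 ≤ x ^ (m+2) * (v x * f x ^ 2)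
    exact mul_nonneg (pow_nonneg hx.1.le _) (mul_nonneg h9 (sq_nonneg _))
  set CA : ℝ := ∫ r in Ioo (0:ℝ) R', AA r with hCA
  have hbound : ∀ k : ℕ, (∫ x in S k, Vst x) ≤ CA := by
    intro k
    have h1 := hstep _ (hek k)
    have hsubk : Icc (R'/((k:ℝ)+2)) R' ⊆ Ioo 0 R := fun x hx =>
      ⟨(hek k).1.trans_le hx.1, lt_of_le_of_lt hx.2 hR'R⟩
    have hAintk : IntegrableOn A (S k) :=
      ((hAc.continuousOn).integrableOn_compact isCompact_Icc (μ := volume)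
        (K := Icc (R'/((k:ℝ)+2)) R')).mono_set Ioo_subset_Icc_self
    have hAAintk : IntegrableOn AA (S k) :=
      ((hAAc.continuousOn).integrableOn_compact isCompact_Icc (μ := volume)
        (K := Icc (R'/((k:ℝ)+2)) R')).mono_set Ioo_subset_Icc_self
    have h2 : (∫ x in S k, A x) ≤ ∫ x in S k, AA x := by
      apply setIntegral_mono_on hAintk hAAintk measurableSet_Ioo
      intro x hx
      have hx0 : (0:ℝ) < x := (hek k).1.trans hx.1
      have h8 : 0 ≤ p^2 * BB x :=
        mul_nonneg (sq_nonneg _) (mul_nonneg (pow_nonneg hx0.le _) (sq_nonneg _))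
      show AA x - p^2 * BB x ≤ AA x
      linarith
    have h3 : (∫ x in S k, AA x) ≤ CA := by
      rw [hCA]
      apply setIntegral_mono_set hAAint
      · filter_upwards [ae_restrict_mem measurableSet_Ioo] with x hx
        show 0 ≤ x ^ (m+2) * deriv f x ^ 2
        exact mul_nonneg (pow_nonneg hx.1.le _) (sq_nonneg _)
      · exact (hSsub k).eventuallyLE
    exact (h1.trans h2).trans h3
  have hVstIk : ∀ k, IntegrableOn Vst (S k) (volume.restrict (Ioo (0:ℝ) R')) := by
    intro k
    rw [IntegrableOn, Measure.restrict_restrict measurableSet_Ioo,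
      inter_eq_left.mpr (hSsub k)]
    have hsubk : Icc (R'/((k:ℝ)+2)) R' ⊆ Ioo 0 R := fun x hx =>
      ⟨(hek k).1.trans_le hx.1, lt_of_le_of_lt hx.2 hR'R⟩
    exact (((hVstc.mono hsubk)).integrableOn_compact isCompact_Icc (μ := volume)
      (K := Icc (R'/((k:ℝ)+2)) R')).mono_set Ioo_subset_Icc_self
  have hnormbound : ∀ k : ℕ, (∫ x in S k, ‖Vst x‖ ∂(volume.restrict (Ioo (0:ℝ) R'))) ≤ CA := by
    intro k
    rw [hrwV]
    have : (∫ x in S k, ‖Vst x‖) = ∫ x in S k, Vst x := by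
      apply setIntegral_congr_fun measurableSet_Ioo
      intro x hx
      exact Real.norm_of_nonneg (hVstnn x (hSsub k hx))
    rw [this]
    exact hbound k
  have hVint : IntegrableOn Vst (Ioo 0 R') :=
    hScover.integrable_of_integral_norm_bounded CA hVstIk
      (Eventually.of_forall hnormbound)
  have hVlim : Tendsto (fun k => ∫ x in S k, Vst x) atTop (𝓝 (∫ x in Ioo (0:ℝ) R', Vst x)) := by
    have := hScover.integral_tendsto_of_countably_generated hVint
    simpa only [hrwV] using this
  have hAlim : Tendsto (fun k => ∫ x in S k, A x) atTop (𝓝 (∫ x in Ioo (0:ℝ) R', A x)) := by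
    have := hScover.integral_tendsto_of_countably_generated (f := A) hAint
    simpa only [hrwV] using this
  have hfinal : (∫ x in Ioo (0:ℝ) R', Vst x) ≤ ∫ x in Ioo (0:ℝ) R', A x :=
    le_of_tendsto_of_tendsto' hVlim hAlim (fun k => hstep _ (hek k))
  have hsplit : (∫ x in Ioo (0:ℝ) R', A x)
      = (∫ x in Ioo (0:ℝ) R', AA x) - p^2 * ∫ x in Ioo (0:ℝ) R', BB x := by
    rw [hA]
    rw [integral_sub hAAint (hBBint.const_mul _), MeasureTheory.integral_const_mul]
  rw [hsplit] at hfinal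
  linarith


/-- Improved Hardy inequality for radial functions (core of Proposition 4.1). -/
theorem improved_hardy_radial
    (n : ℕ) (hn : 3 ≤ n) (R : ℝ) (hR : 0 < R)
    (v : ℝ → ℝ) (hv : ContinuousOn v (Ioo 0 R)) (hvnn : ∀ r ∈ Ioo 0 R, 0 ≤ v r)
    (φ : ℝ → ℝ) (hφC2 : ContDiffOn ℝ 2 φ (Ioo 0 R))
    (hφpos : ∀ r ∈ Ioo 0 R, 0 < φ r)
    (hVφ : ∀ r ∈ Ioo 0 R,
      v r ≤ -((deriv φ r + r * deriv (deriv φ) r) / (r * φ r)))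
    (hbd0 : ∀ ε < (0:ℝ), ∀ᶠ r in nhdsWithin 0 (Ioi 0), ε < r * deriv φ r / φ r)
    (hbdR : ∃ M : ℝ, ∀ᶠ r in nhdsWithin R (Iio R), deriv φ r / φ r ≤ M)
    (u : EuclideanSpace ℝ (Fin n) → ℝ) (hu : ContDiff ℝ 2 u)
    (hsupp : HasCompactSupport u)
    (hΩ : tsupport u ⊆ Metric.ball (0 : EuclideanSpace ℝ (Fin n)) R)
    (u₀ : ℝ → ℝ) (hrad : ∀ x, u x = u₀ ‖x‖) :
    (∫ x in Metric.ball (0 : EuclideanSpace ℝ (Fin n)) R, ‖fderiv ℝ u x‖ ^ 2) ≥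
      ((n - 2 : ℝ) / 2) ^ 2 *
        (∫ x in Metric.ball (0 : EuclideanSpace ℝ (Fin n)) R, (u x) ^ 2 / ‖x‖ ^ 2)
      + ∫ x in Metric.ball (0 : EuclideanSpace ℝ (Fin n)) R, v ‖x‖ * (u x) ^ 2 := by
  obtain ⟨m, rfl⟩ : ∃ m, n = m + 3 := ⟨n - 3, by omega⟩
  clear hn hbd0 hbdR
  set B := Metric.ball (0 : EuclideanSpace ℝ (Fin (m+3))) R with hB
  -- support radius
  obtain ⟨r₀, hr₀pos, hr₀R, hsub⟩ : ∃ r₀, 0 < r₀ ∧ r₀ < R ∧ ∀ x ∈ tsupport u, ‖x‖ ≤ r₀ := by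
    rcases (tsupport u).eq_empty_or_nonempty with he | hne
    · exact ⟨R/2, by linarith, by linarith, by simp [he]⟩
    · obtain ⟨x₀, hx₀, hmax⟩ := hsupp.exists_isMaxOn hne continuous_norm.continuousOn
      have hx₀R : ‖x₀‖ < R := by
        have := hΩ hx₀
        rwa [Metric.mem_ball, dist_zero_right] at this
      refine ⟨max ‖x₀‖ (R/2), lt_max_of_lt_right (by linarith), ?_, ?_⟩
      · exact max_lt hx₀R (by linarith)
      · exact fun x hx => le_max_of_le_left (hmax hx)
  set R' : ℝ := (r₀ + R)/2 with hR'
  have hr₀R' : r₀ < R' := by rw [hR']; linarith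
  have hR'R : R' < R := by rw [hR']; linarith
  have hR'pos : 0 < R' := hr₀pos.trans hr₀R'
  -- the radial profile
  set y : EuclideanSpace ℝ (Fin (m+3)) := EuclideanSpace.single (⟨0, by omega⟩ : Fin (m+3)) (1:ℝ) with hy
  have hynorm : ‖y‖ = 1 := by rw [hy, EuclideanSpace.norm_single]; norm_num
  haveI : Nontrivial (EuclideanSpace ℝ (Fin (m+3))) := ⟨y, 0, by
    intro h
    rw [h, norm_zero] at hynorm
    norm_num at hynorm⟩
  set f : ℝ → ℝ := fun r => u (r • y) with hf
  have hfC2 : ContDiff ℝ 2 f := hu.comp (contDiff_id.smul contDiff_const)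
  have hfval : ∀ r : ℝ, f r = u₀ |r| := by
    intro r
    show u (r • y) = u₀ |r|
    rw [hrad, norm_smul, hynorm, mul_one, Real.norm_eq_abs]
  have hux : ∀ x : EuclideanSpace ℝ (Fin (m+3)), u x = f ‖x‖ := by
    intro x
    rw [hrad x, hfval, abs_of_nonneg (norm_nonneg x)]
  have hf0 : ∀ r, r₀ < r → f r = 0 := by
    intro r hr
    show u (r • y) = 0
    apply image_eq_zero_of_notMem_tsupport
    intro hmem
    have h1 := hsub _ hmem
    rw [norm_smul, hynorm, mul_one, Real.norm_eq_abs] at h1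
    have : r ≤ r₀ := le_trans (le_abs_self r) h1
    linarith
  have hdf0 : ∀ r, r₀ < r → deriv f r = 0 := by
    intro r hr
    have hev : f =ᶠ[nhds r] (fun _ => (0:ℝ)) :=
      eventually_of_mem (isOpen_Ioi.mem_nhds hr) (fun x hx => hf0 x hx)
    rw [hev.deriv_eq, deriv_const]
  -- f is even, so deriv f 0 = 0
  have hfeven : ∀ r : ℝ, f (-r) = f r := by
    intro r; rw [hfval, hfval, abs_neg]
  have hdf0zero : deriv f 0 = 0 := by
    have h1 : (fun x : ℝ => f (-x)) = f := funext hfeven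
    have h2 := deriv_comp_neg (𝕜 := ℝ) f (0:ℝ)
    rw [h1, neg_zero] at h2
    linarith
  -- radial derivative bound
  have hptwise : ∀ x : EuclideanSpace ℝ (Fin (m+3)), (deriv f ‖x‖)^2 ≤ ‖fderiv ℝ u x‖^2 := by
    intro x
    rcases eq_or_ne x 0 with rfl | hx0
    · rw [norm_zero, hdf0zero]
      simpa using sq_nonneg ‖fderiv ℝ u 0‖
    · have hr : 0 < ‖x‖ := norm_pos_iff.mpr hx0
      set z : EuclideanSpace ℝ (Fin (m+3)) := ‖x‖⁻¹ • x with hz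
      have hznorm : ‖z‖ = 1 := by
        rw [hz, norm_smul, norm_inv, norm_norm, inv_mul_cancel₀ hr.ne']
      have hγx : ‖x‖ • z = x := by
        rw [hz, smul_smul, mul_inv_cancel₀ hr.ne', one_smul]
      have hγ : HasDerivAt (fun t : ℝ => t • z) z ‖x‖ := by
        simpa using (hasDerivAt_id (‖x‖)).smul_const z
      have hcomp : HasDerivAt (fun t : ℝ => u (t • z)) ((fderiv ℝ u x) z) ‖x‖ := by
        have hdu : HasFDerivAt u (fderiv ℝ u x) (‖x‖ • z) := by
          rw [hγx]
          exact (hu.differentiable two_ne_zero x).hasFDerivAt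
        exact hdu.comp_hasDerivAt _ hγ
      have heq : (fun t : ℝ => u (t • z)) =ᶠ[nhds ‖x‖] f := by
        apply eventually_of_mem (isOpen_Ioi.mem_nhds hr)
        intro t ht
        show u (t • z) = f t
        rw [hux (t • z), norm_smul, hznorm, mul_one, Real.norm_eq_abs,
          abs_of_nonneg (le_of_lt ht)]
      have hdf : deriv f ‖x‖ = (fderiv ℝ u x) z := by
        rw [← heq.deriv_eq, hcomp.deriv]
      rw [hdf]
      have hbound : |(fderiv ℝ u x) z| ≤ ‖fderiv ℝ u x‖ := by
        calc |(fderiv ℝ u x) z| = ‖(fderiv ℝ u x) z‖ := (Real.norm_eq_abs _).symm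
          _ ≤ ‖fderiv ℝ u x‖ * ‖z‖ := (fderiv ℝ u x).le_opNorm z
          _ = ‖fderiv ℝ u x‖ := by rw [hznorm, mul_one]
      calc ((fderiv ℝ u x) z)^2 = |(fderiv ℝ u x) z|^2 := (sq_abs _).symm
        _ ≤ ‖fderiv ℝ u x‖^2 := pow_le_pow_left₀ (abs_nonneg _) hbound 2
  -- integrability on the ball
  have hIgrad : IntegrableOn (fun x : EuclideanSpace ℝ (Fin (m+3)) => ‖fderiv ℝ u x‖^2) B := by
    have hc : Continuous (fun x : EuclideanSpace ℝ (Fin (m+3)) => ‖fderiv ℝ u x‖^2) :=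
      ((hu.continuous_fderiv two_ne_zero).norm).pow 2
    exact ((hc.continuousOn).integrableOn_compact (isCompact_closedBall (0:EuclideanSpace ℝ (Fin (m+3))) R)).mono_set
      Metric.ball_subset_closedBall
  have hIf' : IntegrableOn (fun x : EuclideanSpace ℝ (Fin (m+3)) => (deriv f ‖x‖)^2) B := by
    have hc : Continuous (fun x : EuclideanSpace ℝ (Fin (m+3)) => (deriv f ‖x‖)^2) :=
      ((hfC2.continuous_deriv one_le_two).comp continuous_norm).pow 2
    exact ((hc.continuousOn).integrableOn_compact (isCompact_closedBall (0:EuclideanSpace ℝ (Fin (m+3))) R)).mono_set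
      Metric.ball_subset_closedBall
  have hstep1 : (∫ x in B, (deriv f ‖x‖)^2) ≤ ∫ x in B, ‖fderiv ℝ u x‖^2 :=
    setIntegral_mono_on hIf' hIgrad measurableSet_ball (fun x _ => hptwise x)
  -- polar coordinates
  have hpolar : ∀ F : ℝ → ℝ, (∫ x : EuclideanSpace ℝ (Fin (m+3)), F ‖x‖) =
      ((m:ℝ)+3) * ((volume (Metric.ball (0:EuclideanSpace ℝ (Fin (m+3))) 1)).toReal
        * ∫ r in Ioi (0:ℝ), r ^ (m+2) * F r) := by
    intro F
    have h := integral_fun_norm_addHaar (volume : Measure (EuclideanSpace ℝ (Fin (m+3)))) F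
    rw [show Module.finrank ℝ (EuclideanSpace ℝ (Fin (m+3))) = m + 3 from finrank_euclideanSpace_fin] at h
    have h31 : m + 3 - 1 = m + 2 := by omega
    rw [h31] at h
    rw [h]
    simp only [nsmul_eq_mul, smul_eq_mul, measureReal_def]
    push_cast
    ring
  -- extension from ball to whole space
  have hext : ∀ F : ℝ → ℝ, (∀ r : ℝ, R ≤ r → F r = 0) →
      (∫ x in B, F ‖x‖) = ∫ x : EuclideanSpace ℝ (Fin (m+3)), F ‖x‖ := by
    intro F hF
    apply setIntegral_eq_integral_of_forall_compl_eq_zero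
    intro x hx
    rw [hB, Metric.mem_ball, dist_zero_right, not_lt] at hx
    exact hF _ hx
  -- restriction from Ioi 0 to Ioo 0 R'
  have hres : ∀ g : ℝ → ℝ, (∀ r : ℝ, R' ≤ r → g r = 0) →
      (∫ r in Ioi (0:ℝ), g r) = ∫ r in Ioo (0:ℝ) R', g r := by
    intro g hg
    apply setIntegral_eq_of_subset_of_ae_diff_eq_zero measurableSet_Ioi.nullMeasurableSet
      (fun x hx => hx.1)
    apply ae_of_all
    rintro x ⟨hx1, hx2⟩
    apply hg
    by_contra hcon
    push_neg at hcon
    exact hx2 ⟨hx1, hcon⟩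
  set C : ℝ := (volume (Metric.ball (0:EuclideanSpace ℝ (Fin (m+3))) 1)).toReal with hC
  -- the three integral identities
  have hgrad_eq : (∫ x in B, (deriv f ‖x‖)^2)
      = ((m:ℝ)+3) * (C * ∫ r in Ioo (0:ℝ) R', r ^ (m+2) * (deriv f r)^2) := by
    have hz1 : ∀ r : ℝ, R ≤ r → (deriv f r)^2 = 0 := fun r hr => by
      rw [hdf0 r (lt_of_lt_of_le (hr₀R'.trans hR'R) hr)]; ring
    have hz2 : ∀ r : ℝ, R' ≤ r → r ^ (m+2) * (deriv f r)^2 = 0 := fun r hr => by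
      rw [hdf0 r (lt_of_lt_of_le hr₀R' hr)]; ring
    calc (∫ x in B, (deriv f ‖x‖)^2)
        = ∫ x : EuclideanSpace ℝ (Fin (m+3)), (deriv f ‖x‖)^2 := hext (fun r => (deriv f r)^2) hz1
      _ = ((m:ℝ)+3) * (C * ∫ r in Ioi (0:ℝ), r ^ (m+2) * (deriv f r)^2) :=
          hpolar (fun r => (deriv f r)^2)
      _ = ((m:ℝ)+3) * (C * ∫ r in Ioo (0:ℝ) R', r ^ (m+2) * (deriv f r)^2) := by
          congr 1
          congr 1
          exact hres (fun r => r ^ (m+2) * (deriv f r)^2) hz2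
  have hhardy_eq : (∫ x in B, (u x)^2 / ‖x‖^2)
      = ((m:ℝ)+3) * (C * ∫ r in Ioo (0:ℝ) R', r ^ m * (f r)^2) := by
    have hz1 : ∀ r : ℝ, R ≤ r → (f r)^2 / r^2 = 0 := fun r hr => by
      rw [hf0 r (lt_of_lt_of_le (hr₀R'.trans hR'R) hr)]; simp
    have hz2 : ∀ r : ℝ, R' ≤ r → r ^ (m+2) * ((f r)^2 / r^2) = 0 := fun r hr => by
      rw [hf0 r (lt_of_lt_of_le hr₀R' hr)]; simp
    calc (∫ x in B, (u x)^2 / ‖x‖^2)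
        = ∫ x in B, (f ‖x‖)^2 / ‖x‖^2 :=
          setIntegral_congr_fun measurableSet_ball (fun x _ => by rw [hux x])
      _ = ∫ x : EuclideanSpace ℝ (Fin (m+3)), (f ‖x‖)^2 / ‖x‖^2 := hext (fun r => (f r)^2 / r^2) hz1
      _ = ((m:ℝ)+3) * (C * ∫ r in Ioi (0:ℝ), r ^ (m+2) * ((f r)^2 / r^2)) :=
          hpolar (fun r => (f r)^2 / r^2)
      _ = ((m:ℝ)+3) * (C * ∫ r in Ioo (0:ℝ) R', r ^ (m+2) * ((f r)^2 / r^2)) := by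
          congr 1
          congr 1
          exact hres (fun r => r ^ (m+2) * ((f r)^2 / r^2)) hz2
      _ = ((m:ℝ)+3) * (C * ∫ r in Ioo (0:ℝ) R', r ^ m * (f r)^2) := by
          congr 1
          congr 1
          apply setIntegral_congr_fun measurableSet_Ioo
          intro r hr
          have hrne : r ≠ 0 := ne_of_gt hr.1
          field_simp
          ring
  have hpot_eq : (∫ x in B, v ‖x‖ * (u x)^2)
      = ((m:ℝ)+3) * (C * ∫ r in Ioo (0:ℝ) R', r ^ (m+2) * (v r * (f r)^2)) := by
    have hz1 : ∀ r : ℝ, R ≤ r → v r * (f r)^2 = 0 := fun r hr => by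
      rw [hf0 r (lt_of_lt_of_le (hr₀R'.trans hR'R) hr)]; simp
    have hz2 : ∀ r : ℝ, R' ≤ r → r ^ (m+2) * (v r * (f r)^2) = 0 := fun r hr => by
      rw [hf0 r (lt_of_lt_of_le hr₀R' hr)]; simp
    calc (∫ x in B, v ‖x‖ * (u x)^2)
        = ∫ x in B, v ‖x‖ * (f ‖x‖)^2 :=
          setIntegral_congr_fun measurableSet_ball (fun x _ => by rw [hux x])
      _ = ∫ x : EuclideanSpace ℝ (Fin (m+3)), v ‖x‖ * (f ‖x‖)^2 := hext (fun r => v r * (f r)^2) hz1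
      _ = ((m:ℝ)+3) * (C * ∫ r in Ioi (0:ℝ), r ^ (m+2) * (v r * (f r)^2)) :=
          hpolar (fun r => v r * (f r)^2)
      _ = ((m:ℝ)+3) * (C * ∫ r in Ioo (0:ℝ) R', r ^ (m+2) * (v r * (f r)^2)) := by
          congr 1
          congr 1
          exact hres (fun r => r ^ (m+2) * (v r * (f r)^2)) hz2
  -- core inequality
  have hcore := core1d m R R' r₀ hr₀pos hr₀R' hR'R v hv hvnn φ hφC2 hφpos hVφ f hfC2 hf0
  have hp0 : ((((m+3:ℕ)):ℝ) - 2)/2 = ((m:ℝ)+1)/2 := by push_cast; ring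
  rw [ge_iff_le, hhardy_eq, hpot_eq, hp0]
  calc (((m:ℝ)+1)/2)^2 * (((m:ℝ)+3) * (C * ∫ r in Ioo (0:ℝ) R', r ^ m * (f r)^2))
        + ((m:ℝ)+3) * (C * ∫ r in Ioo (0:ℝ) R', r ^ (m+2) * (v r * (f r)^2))
      = ((m:ℝ)+3) * (C * ((((m:ℝ)+1)/2)^2 * (∫ r in Ioo (0:ℝ) R', r ^ m * (f r)^2)
          + ∫ r in Ioo (0:ℝ) R', r ^ (m+2) * (v r * (f r)^2))) := by ring
    _ ≤ ((m:ℝ)+3) * (C * ∫ r in Ioo (0:ℝ) R', r ^ (m+2) * (deriv f r)^2) := by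
        apply mul_le_mul_of_nonneg_left _ (by positivity)
        apply mul_le_mul_of_nonneg_left hcore ENNReal.toReal_nonneg
    _ = ∫ x in B, (deriv f ‖x‖)^2 := hgrad_eq.symm
    _ ≤ ∫ x in B, ‖fderiv ℝ u x‖^2 := hstep1
end
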